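/- arXiv:math/0607150 — 6 statements merged into one kernel-verified Lean document; each statement's English description precedes it below -/
import Mathlib

section
/- Let 0 < c < 1, G > 0, and let γ : ℤ → ℝ be an even function with γ(τ)/(G τ^{c−1}) → 1 as τ → +∞. Let k be a kernel satisfying Assumption B which is in addition Riemann integrable on [−1,1]. Then, for any sequence of positive integers M → ∞, M^{−c} Σ_{τ=−M}^{M} k(τ/M) γ(τ) → G ∫_{−1}^{1} k(υ)|υ|^{c−1} dυ, and this limit is finite. -/
open MeasureTheory Filter Finset

/-- Assumption B: the kernel is symmetric, nonnegative, bounded, measurable,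
integrates to one over `[-1,1]`, and vanishes outside `[-1,1]`. -/
def AssumptionB (kern : ℝ → ℝ) : Prop :=
  (∀ v, kern (-v) = kern v) ∧ (∀ v, 0 ≤ kern v) ∧ (∃ B, ∀ v, kern v ≤ B) ∧
    Measurable kern ∧ (∫ v in (-1 : ℝ)..1, kern v) = 1 ∧ ∀ v : ℝ, 1 < |v| → kern v = 0

open Topology

/-! Write `γ n = ρ n * n^(c-1)` with `ρ n → G`. By evenness the sum folds onto `τ ≥ 1`, up to the
`τ = 0` term, which is `O(M^(-c))`. The folded sum `M^(-c) Σ_{n=1}^{M} k(n/M) γ(n)` is the integral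
over `(0,1]` of the step function `k(⌈Mv⌉/M) ρ(⌈Mv⌉) (⌈Mv⌉/M)^(c-1)`. Since `⌈Mv⌉/M → v` from above
and `c ≤ 1`, the step functions are dominated by `sup|k| sup|ρ| v^(c-1)`, integrable as `c > 0`,
and converge to `G k(v) v^(c-1)` at every continuity point of `k`; dominated convergence concludes.
-/

theorem sum_Icc_neg_self_of_even {A : Type*} [AddCommMonoid A] (f : ℤ → A)
    (hf : ∀ τ, f (-τ) = f τ) (m : ℕ) :
    ∑ τ ∈ Icc (-(m : ℤ)) m, f τ = f 0 + 2 • ∑ i ∈ range m, f ((i + 1 : ℕ) : ℤ) := by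
  induction m with
  | zero => simp
  | succ m ih =>
    have hIcc : Icc (-((m + 1 : ℕ) : ℤ)) ((m + 1 : ℕ) : ℤ)
        = insert (-((m + 1 : ℕ) : ℤ)) (insert ((m + 1 : ℕ) : ℤ) (Icc (-(m : ℤ)) m)) := by
      ext x; simp only [mem_Icc, mem_insert]; omega
    rw [hIcc, sum_insert (by simp only [mem_insert, mem_Icc]; omega),
      sum_insert (by simp only [mem_Icc]; omega), ih, hf, sum_range_succ, smul_add, two_nsmul]
    abel

theorem integral_neg_self_of_even {E : Type*} [NormedAddCommGroup E] [NormedSpace ℝ E]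
    {f : ℝ → E} (hf : ∀ x, f (-x) = f x) {a : ℝ} (hi : IntervalIntegrable f volume 0 a) :
    ∫ x in -a..a, f x = (2 : ℝ) • ∫ x in 0..a, f x := by
  have hi_neg : IntervalIntegrable f volume (-a) 0 := by
    simpa [hf] using (hi.comp_sub_left 0).symm
  have hneg : ∫ x in -a..0, f x = ∫ x in 0..a, f x := by
    simpa [hf] using (intervalIntegral.integral_comp_neg (a := 0) (b := a) f).symm
  rw [← intervalIntegral.integral_add_adjacent_intervals hi_neg hi, hneg, two_smul]

theorem integral_mul_abs_rpow_of_even {k : ℝ → ℝ} {B s : ℝ} (hk_even : ∀ v, k (-v) = k v)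
    (hk_meas : AEStronglyMeasurable k) (hkB : ∀ v, |k v| ≤ B) (hs : -1 < s) :
    ∫ v in (-1 : ℝ)..1, k v * |v| ^ s = 2 * ∫ v in Set.Ioc (0 : ℝ) 1, k v * v ^ s := by
  have habs : Set.EqOn (fun v => k v * v ^ s) (fun v => k v * |v| ^ s) (Set.Ioc 0 1) :=
    fun v hv => by simp only [abs_of_pos hv.1]
  have hint : IntegrableOn (fun v => k v * v ^ s) (Set.Ioc 0 1) :=
    ((intervalIntegrable_iff_integrableOn_Ioc_of_le zero_le_one).mp
      (intervalIntegral.intervalIntegrable_rpow' hs)).bdd_mul hk_meas.restrict (ae_of_all _ hkB)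
  rw [integral_neg_self_of_even (fun v => by simp only [hk_even, abs_neg])
      ((intervalIntegrable_iff_integrableOn_Ioc_of_le zero_le_one).mpr
        (hint.congr_fun habs measurableSet_Ioc)),
    intervalIntegral.integral_of_le zero_le_one, setIntegral_congr_fun measurableSet_Ioc habs,
    smul_eq_mul]

theorem tendsto_natCeil_mul_div {v : ℝ} (hv : 0 ≤ v) :
    Tendsto (fun m : ℕ => (⌈(m : ℝ) * v⌉₊ : ℝ) / m) atTop (𝓝 v) := by
  have hupper : Tendsto (fun m : ℕ => v + (m : ℝ)⁻¹) atTop (𝓝 v) := by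
    simpa using tendsto_const_nhds.add (tendsto_inv_atTop_nhds_zero_nat (𝕜 := ℝ))
  refine tendsto_of_tendsto_of_tendsto_of_le_of_le' tendsto_const_nhds hupper ?_ ?_ <;>
    filter_upwards [eventually_gt_atTop 0] with m hm
  · rw [le_div_iff₀ (Nat.cast_pos.mpr hm), mul_comm]
    exact Nat.le_ceil _
  · rw [div_le_iff₀ (Nat.cast_pos.mpr hm), add_mul, inv_mul_cancel₀ (Nat.cast_pos.mpr hm).ne',
      mul_comm]
    exact (Nat.ceil_lt_add_one (by positivity)).le

theorem integral_Ioc_natCeil_mul (h : ℕ → ℝ) {m : ℕ} (hm : 0 < m) :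
    ∫ v in Set.Ioc (0 : ℝ) 1, h ⌈(m : ℝ) * v⌉₊ = (m : ℝ)⁻¹ * ∑ i ∈ range m, h (i + 1) := by
  have hm' : (0 : ℝ) < m := by exact_mod_cast hm
  set a : ℕ → ℝ := fun i => i / m
  have ha : ∀ i, a i ≤ a (i + 1) := fun i => by simp only [a]; gcongr; simp
  have hceil : ∀ i, Set.EqOn (fun v : ℝ => h ⌈(m : ℝ) * v⌉₊) (fun _ => h (i + 1))
      (Set.Ioc (a i) (a (i + 1))) := by
    intro i v ⟨hlo, hhi⟩
    simp only [a, div_lt_iff₀' hm', le_div_iff₀' hm'] at hlo hhi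
    simp only [(Nat.ceil_eq_iff (Nat.succ_ne_zero i)).mpr ⟨by simpa using hlo, hhi⟩]
  have hpiece : ∀ i, ∫ v in a i..a (i + 1), h ⌈(m : ℝ) * v⌉₊ = (m : ℝ)⁻¹ * h (i + 1) := by
    intro i
    rw [intervalIntegral.integral_of_le (ha i), setIntegral_congr_fun measurableSet_Ioc (hceil i),
      setIntegral_const, Real.volume_real_Ioc_of_le (ha i), smul_eq_mul]
    simp only [a]; push_cast; field_simp; ring
  have hint : ∀ i, IntervalIntegrable (fun v : ℝ => h ⌈(m : ℝ) * v⌉₊) volume (a i) (a (i + 1)) :=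
    fun i => (intervalIntegrable_iff_integrableOn_Ioc_of_le (ha i)).mpr <|
      (integrableOn_const measure_Ioc_lt_top.ne).congr_fun (hceil i).symm measurableSet_Ioc
  have h0 : a 0 = 0 := by simp [a]
  have h1 : a m = 1 := div_self hm'.ne'
  rw [← intervalIntegral.integral_of_le zero_le_one, ← h0, ← h1,
    ← intervalIntegral.sum_integral_adjacent_intervals fun i _ => hint i, mul_sum]
  exact sum_congr rfl fun i _ => hpiece i

noncomputable def riemannSample (c : ℝ) (a : ℕ → ℝ) (k : ℝ → ℝ) (m n : ℕ) : ℝ :=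
  k (n / m) * (a n / (n : ℝ) ^ (c - 1)) * ((n : ℝ) / m) ^ (c - 1)

section RiemannSample

variable {c : ℝ} {a : ℕ → ℝ} {k : ℝ → ℝ}

theorem inv_mul_riemannSample {m n : ℕ} (hm : 0 < m) (hn : 0 < n) :
    (m : ℝ)⁻¹ * riemannSample c a k m n = (m : ℝ) ^ (-c) * (k (n / m) * a n) := by
  have hm' : (0 : ℝ) < m := Nat.cast_pos.mpr hm
  have hn' : (0 : ℝ) < n := Nat.cast_pos.mpr hn
  have hinv : (m : ℝ)⁻¹ = (m : ℝ) ^ (-c) * (m : ℝ) ^ (c - 1) := by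
    rw [← Real.rpow_add hm', show -c + (c - 1) = -1 by ring, Real.rpow_neg_one]
  rw [riemannSample, Real.div_rpow hn'.le hm'.le, hinv]
  field_simp [(Real.rpow_pos_of_pos hn' (c - 1)).ne', (Real.rpow_pos_of_pos hm' (c - 1)).ne']

theorem abs_riemannSample_natCeil_le {B C : ℝ} (hkB : ∀ v, |k v| ≤ B)
    (haC : ∀ n : ℕ, |a n / (n : ℝ) ^ (c - 1)| ≤ C) (hc : c ≤ 1) {m : ℕ} (hm : 0 < m) {v : ℝ}
    (hv : 0 < v) :
    |riemannSample c a k m ⌈(m : ℝ) * v⌉₊| ≤ B * C * v ^ (c - 1) := by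
  have hm' : (0 : ℝ) < m := Nat.cast_pos.mpr hm
  have hv_le : v ≤ (⌈(m : ℝ) * v⌉₊ : ℝ) / m := by
    rw [le_div_iff₀ hm', mul_comm]
    exact Nat.le_ceil _
  rw [riemannSample, abs_mul, abs_mul, abs_of_nonneg (Real.rpow_nonneg (hv.trans_le hv_le).le _)]
  have hB : 0 ≤ B := (abs_nonneg _).trans (hkB 0)
  exact mul_le_mul (mul_le_mul (hkB _) (haC _) (abs_nonneg _) hB)
    (Real.rpow_le_rpow_of_nonpos hv hv_le (by linarith)) (by positivity)
    (mul_nonneg hB ((abs_nonneg _).trans (haC 0)))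

theorem tendsto_riemannSample_natCeil {L : ℝ}
    (ha : Tendsto (fun n : ℕ => a n / (n : ℝ) ^ (c - 1)) atTop (𝓝 L)) {v : ℝ} (hv : 0 < v)
    (hk : ContinuousAt k v) :
    Tendsto (fun m : ℕ => riemannSample c a k m ⌈(m : ℝ) * v⌉₊) atTop
      (𝓝 (L * (k v * v ^ (c - 1)))) := by
  have hr := tendsto_natCeil_mul_div hv.le
  have hceil : Tendsto (fun m : ℕ => ⌈(m : ℝ) * v⌉₊) atTop atTop :=
    tendsto_nat_ceil_atTop.comp (tendsto_natCast_atTop_atTop.atTop_mul_const hv)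
  have hlim := ((hk.tendsto.comp hr).mul (ha.comp hceil)).mul
    ((Real.continuousAt_rpow_const v (c - 1) (Or.inl hv.ne')).tendsto.comp hr)
  rwa [mul_comm (k v) L, mul_assoc] at hlim

end RiemannSample

theorem tendsto_rpow_neg_mul_sum {c L B : ℝ} (hc0 : 0 < c) (hc1 : c ≤ 1) {a : ℕ → ℝ}
    (ha : Tendsto (fun n : ℕ => a n / (n : ℝ) ^ (c - 1)) atTop (𝓝 L)) {k : ℝ → ℝ}
    (hkB : ∀ v, |k v| ≤ B)
    (hk_cont : ∀ᵐ v ∂volume.restrict (Set.Ioc (0 : ℝ) 1), ContinuousAt k v) :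
    Tendsto (fun m : ℕ => (m : ℝ) ^ (-c) * ∑ i ∈ range m, k (((i + 1 : ℕ) : ℝ) / m) * a (i + 1))
      atTop (𝓝 (L * ∫ v in Set.Ioc (0 : ℝ) 1, k v * v ^ (c - 1))) := by
  obtain ⟨C, hC⟩ := isBounded_iff_forall_norm_le.mp (Metric.isBounded_range_of_tendsto _ ha)
  have hpow_int : IntegrableOn (fun v : ℝ => v ^ (c - 1)) (Set.Ioc 0 1) :=
    (intervalIntegrable_iff_integrableOn_Ioc_of_le zero_le_one).mp
      (intervalIntegral.intervalIntegrable_rpow' (by linarith))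
  have hlim := tendsto_integral_filter_of_dominated_convergence
    (F := fun (m : ℕ) (v : ℝ) => riemannSample c a k m ⌈(m : ℝ) * v⌉₊)
    (fun v => B * C * v ^ (c - 1))
    (Eventually.of_forall fun m => ((measurable_of_countable (riemannSample c a k m)).comp
      (Nat.measurable_ceil.comp (measurable_const_mul _))).aestronglyMeasurable)
    (by
      filter_upwards [eventually_gt_atTop 0] with m hm
      filter_upwards [ae_restrict_mem measurableSet_Ioc] with v hv
      exact abs_riemannSample_natCeil_le hkB (fun n => hC _ ⟨n, rfl⟩) hc1 hm hv.1)
    (hpow_int.const_mul (B * C))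
    (by
      filter_upwards [hk_cont, ae_restrict_mem measurableSet_Ioc] with v hv_cont hv
      exact tendsto_riemannSample_natCeil ha hv.1 hv_cont)
  rw [← integral_const_mul]
  refine hlim.congr' ?_
  filter_upwards [eventually_gt_atTop 0] with m hm
  rw [integral_Ioc_natCeil_mul _ hm, mul_sum, mul_sum]
  exact sum_congr rfl fun i _ => inv_mul_riemannSample hm (Nat.succ_pos i)

theorem weighted_sum_limit_general (c G : ℝ) (hc0 : 0 < c) (hc1 : c < 1) (hG : 0 < G)
    (γ : ℤ → ℝ) (hγeven : ∀ τ : ℤ, γ (-τ) = γ τ)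
    (hγ : Tendsto (fun τ : ℕ => γ τ / (G * (τ : ℝ) ^ (c - 1))) atTop (nhds 1))
    (kern : ℝ → ℝ) (hB : AssumptionB kern)
    (hRiemann : ∀ᵐ v ∂(volume.restrict (Set.Icc (-1 : ℝ) 1)), ContinuousAt kern v)
    (M : ℕ → ℕ) (hM : Tendsto M atTop atTop) :
    Tendsto (fun n => (M n : ℝ) ^ (-c) *
        ∑ τ ∈ Finset.Icc (-(M n : ℤ)) (M n : ℤ), kern ((τ : ℝ) / (M n : ℝ)) * γ τ)
      atTop (nhds (G * ∫ v in (-1 : ℝ)..1, kern v * |v| ^ (c - 1))) := by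
  obtain ⟨hk_even, hk_nonneg, ⟨B, hk_le⟩, hk_meas, -, -⟩ := hB
  have hkB : ∀ v, |kern v| ≤ B := fun v => (abs_of_nonneg (hk_nonneg v)).trans_le (hk_le v)
  have hratio : Tendsto (fun n : ℕ => γ n / (n : ℝ) ^ (c - 1)) atTop (𝓝 G) := by
    simpa [mul_div_assoc', mul_div_mul_left _ _ hG.ne'] using hγ.const_mul G
  have hcont : ∀ᵐ v ∂volume.restrict (Set.Ioc (0 : ℝ) 1), ContinuousAt kern v :=
    ae_restrict_of_ae_restrict_of_subset
      (Set.Ioc_subset_Icc_self.trans (Set.Icc_subset_Icc (by norm_num) le_rfl)) hRiemann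
  have hpositive := tendsto_rpow_neg_mul_sum hc0 hc1.le hratio hkB hcont
  have hcentre : Tendsto (fun m : ℕ => (m : ℝ) ^ (-c) * (kern 0 * γ 0)) atTop (𝓝 0) := by
    simpa using ((tendsto_rpow_neg_atTop hc0).comp tendsto_natCast_atTop_atTop).mul_const _
  have hsplit : ∀ m : ℕ, (m : ℝ) ^ (-c) * ∑ τ ∈ Icc (-(m : ℤ)) m, kern (τ / m) * γ τ
      = (m : ℝ) ^ (-c) * (kern 0 * γ 0) + 2 * ((m : ℝ) ^ (-c) *
          ∑ i ∈ range m, kern (((i + 1 : ℕ) : ℝ) / m) * γ (i + 1 : ℕ)) := by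
    intro m
    rw [sum_Icc_neg_self_of_even _ (fun τ => by rw [Int.cast_neg, neg_div, hk_even, hγeven]) m]
    simp only [Int.cast_zero, zero_div, Int.cast_natCast, nsmul_eq_mul, Nat.cast_ofNat]
    ring
  rw [integral_mul_abs_rpow_of_even hk_even hk_meas.aestronglyMeasurable hkB (by linarith),
    show G * (2 * ∫ v in Set.Ioc (0 : ℝ) 1, kern v * v ^ (c - 1))
      = 0 + 2 * (G * ∫ v in Set.Ioc (0 : ℝ) 1, kern v * v ^ (c - 1)) by ring]
  exact ((hcentre.add (hpositive.const_mul 2)).congr fun m => (hsplit m).symm).comp hM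

/-- the deterministic dominated-convergence step of Theorem 1:
for an even `γ : ℤ → ℝ` with `γ(τ) ≃ G τ^{c-1}` as `τ → ∞` (`0 < c < 1`, `G > 0`)
and a Riemann-integrable kernel satisfying Assumption B (Riemann integrability of the
bounded kernel is expressed via Lebesgue's criterion: a.e. continuity on `[-1,1]`),
`M^{-c} Σ_{τ=-M}^{M} k(τ/M) γ(τ) → G ∫_{-1}^{1} k(υ)|υ|^{c-1} dυ`. -/
theorem weighted_sum_limit (c G : ℝ) (hc0 : 0 < c) (hc1 : c < 1) (hG : 0 < G)
    (γ : ℤ → ℝ) (hγeven : ∀ τ : ℤ, γ (-τ) = γ τ)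
    (hγ : Tendsto (fun τ : ℕ => γ τ / (G * (τ : ℝ) ^ (c - 1))) atTop (nhds 1))
    (kern : ℝ → ℝ) (hB : AssumptionB kern)
    (hRiemann : ∀ᵐ v ∂(volume.restrict (Set.Icc (-1 : ℝ) 1)), ContinuousAt kern v)
    (M : ℕ → ℕ) (hMpos : ∀ n, 0 < M n) (hM : Tendsto M atTop atTop) :
    Tendsto (fun n => (M n : ℝ) ^ (-c) *
        ∑ τ ∈ Finset.Icc (-(M n : ℤ)) (M n : ℤ), kern ((τ : ℝ) / (M n : ℝ)) * γ τ)
      atTop (nhds (G * ∫ v in (-1 : ℝ)..1, kern v * |v| ^ (c - 1))) :=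
  weighted_sum_limit_general c G hc0 hc1 hG γ hγeven hγ kern hB hRiemann M hM
end

section
/- Let 0 < d_a < 1/2, 0 < d_b < 1/2 and C > 0. Let γ₁, γ₂ : ℤ → ℝ satisfy |γ₁(τ)| ≤ C(|τ|+1)^{2d_a−1} and |γ₂(τ)| ≤ C(|τ|+1)^{2d_b−1} for all τ. Let M = M(n) be a sequence of positive integers with M → ∞, M ≤ n and M/n → 0 as n → ∞. Then Σ_{p=−M}^{M} Σ_{q=−M}^{M} n^{−1} | Σ_{r=−n+1}^{n−1} (1 − |r|/n) γ₁(r) γ₂(r+q−p) | = o(M^{2d_a+2d_b}) as n → ∞. -/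
/-! Bounding `|1 - |r|/n|` by `1` and exchanging the sums, each of the `2M + 1` values of `p`
contributes at most `n⁻¹ (∑_{|r|<n} |γ₁ r|) · sup_c ∑_{|q|≤M} |γ₂ (q + c)|`. Since `|k| ↦ (|k|+1)^β`
takes each value at most twice and is antitone, its sum over any `N` integers is at most
`2 ∑_{i<N} (i+1)^β ≤ 2 N^{β+1}/(β+1)` for `-1 < β ≤ 0`. The whole expression is therefore
`O(M · n^{2d_a-1} · M^{2d_b})`, and after dividing by `M^{2d_a+2d_b}` it is
`O((M/n)^{1-2d_a}) → 0`. -/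

open Filter Finset

theorem Antitone.sum_le_sum_range_card {h : ℕ → ℝ} (hh : Antitone h) (S : Finset ℕ) :
    ∑ k ∈ S, h k ≤ ∑ i ∈ range #S, h i := by
  induction S using Finset.induction_on_max with
  | empty => simp
  | insert a s ha ih =>
    have has : a ∉ s := fun h => (ha a h).false
    have hcard : #s ≤ a := by
      simpa using card_le_card (fun x hx => mem_range.2 (ha x hx) : s ⊆ range a)
    rw [sum_insert has, card_insert_of_notMem has, sum_range_succ, add_comm]
    exact add_le_add ih (hh hcard)

theorem Antitone.sum_natAbs_le {h : ℕ → ℝ} (hh : Antitone h) (h0 : ∀ i, 0 ≤ h i)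
    (T : Finset ℤ) : ∑ k ∈ T, h k.natAbs ≤ 2 * ∑ i ∈ range #T, h i := by
  have hsign : ∀ p : ℤ → Prop, [DecidablePred p] → Set.InjOn Int.natAbs {k | p k} →
      ∑ k ∈ T with p k, h k.natAbs ≤ ∑ i ∈ range #T, h i := by
    intro p _ hinj
    calc ∑ k ∈ T with p k, h k.natAbs
        = ∑ i ∈ (T.filter p).image Int.natAbs, h i :=
          (sum_image fun x hx y hy => hinj (mem_filter.1 hx).2 (mem_filter.1 hy).2).symm
      _ ≤ ∑ i ∈ range #((T.filter p).image Int.natAbs), h i := hh.sum_le_sum_range_card _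
      _ ≤ ∑ i ∈ range #T, h i :=
          sum_le_sum_of_subset_of_nonneg
            (range_subset_range.2 (card_image_le.trans (card_filter_le _ _)))
            fun i _ _ => h0 i
  rw [← sum_filter_add_sum_filter_not T (0 ≤ ·), two_mul]
  refine add_le_add (hsign _ fun x hx y hy hxy => ?_) (hsign _ fun x hx y hy hxy => ?_) <;>
    simp only [Set.mem_ofPred_eq] at hx hy <;> omega

theorem sum_range_add_one_rpow_le {β : ℝ} (hβ1 : -1 < β) (hβ0 : β ≤ 0) (N : ℕ) :
    ∑ i ∈ range N, ((i : ℝ) + 1) ^ β ≤ (N : ℝ) ^ (β + 1) / (β + 1) := by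
  have hβ : 0 < β + 1 := by linarith
  obtain _ | N := N
  · simp [Real.zero_rpow hβ.ne']
  have hanti : AntitoneOn (fun x : ℝ => x ^ β) (Set.Icc 1 (1 + N)) := fun x hx y _ hxy =>
    Real.rpow_le_rpow_of_nonpos (by linarith [hx.1]) hxy hβ0
  have htail := hanti.sum_le_integral
  rw [integral_rpow (Or.inl hβ1), Real.one_rpow] at htail
  have hone : 1 ≤ 1 / (β + 1) := by rw [le_div_iff₀ hβ]; linarith
  rw [sum_range_succ', Nat.cast_zero, zero_add, Real.one_rpow]
  push_cast
  simp only [Nat.cast_succ, add_comm (1 : ℝ)] at htail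
  calc ∑ i ∈ range N, ((i : ℝ) + 1 + 1) ^ β + 1
      ≤ (((N : ℝ) + 1) ^ (β + 1) - 1) / (β + 1) + 1 / (β + 1) := by gcongr
    _ = ((N : ℝ) + 1) ^ (β + 1) / (β + 1) := by ring

theorem sum_abs_le_of_abs_le_rpow {γ : ℤ → ℝ} {C β : ℝ} (hC : 0 ≤ C) (hβ1 : -1 < β)
    (hβ0 : β ≤ 0) (hγ : ∀ τ : ℤ, |γ τ| ≤ C * (|(τ : ℝ)| + 1) ^ β) (T : Finset ℤ) {x : ℝ}
    (hx : (#T : ℝ) ≤ x) : ∑ k ∈ T, |γ k| ≤ C * (2 / (β + 1)) * x ^ (β + 1) := by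
  have hβ : 0 < β + 1 := by linarith
  set h : ℕ → ℝ := fun i => ((i : ℝ) + 1) ^ β
  have hanti : Antitone h := fun i j hij =>
    Real.rpow_le_rpow_of_nonpos (by positivity) (by gcongr) hβ0
  calc ∑ k ∈ T, |γ k| ≤ C * ∑ k ∈ T, h k.natAbs := by
        rw [mul_sum]
        refine sum_le_sum fun k _ => ?_
        simpa [h, Nat.cast_natAbs] using hγ k
    _ ≤ C * (2 * ((#T : ℝ) ^ (β + 1) / (β + 1))) := by
        gcongr
        exact (hanti.sum_natAbs_le (fun i => by positivity) T).trans
          (by gcongr; exact sum_range_add_one_rpow_le hβ1 hβ0 _)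
    _ = C * (2 / (β + 1)) * (#T : ℝ) ^ (β + 1) := by ring
    _ ≤ C * (2 / (β + 1)) * x ^ (β + 1) := by gcongr

theorem sum_sum_abs_sum_mul_shift_le {P Q R : Finset ℤ} {w f g : ℤ → ℝ}
    (hw : ∀ r ∈ R, |w r| ≤ 1) {B : ℝ} (hB : ∀ c, ∑ q ∈ Q, |g (q + c)| ≤ B) :
    ∑ p ∈ P, ∑ q ∈ Q, |∑ r ∈ R, w r * f r * g (r + q - p)| ≤
      #P * ((∑ r ∈ R, |f r|) * B) := by
  rw [← nsmul_eq_mul]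
  refine sum_le_card_nsmul _ _ _ fun p _ => ?_
  calc ∑ q ∈ Q, |∑ r ∈ R, w r * f r * g (r + q - p)|
      ≤ ∑ q ∈ Q, ∑ r ∈ R, |f r| * |g (q + (r - p))| := by
        refine sum_le_sum fun q _ => (abs_sum_le_sum_abs _ _).trans (sum_le_sum fun r hr => ?_)
        rw [abs_mul, abs_mul, mul_assoc, show q + (r - p) = r + q - p by ring]
        exact mul_le_of_le_one_left (by positivity) (hw r hr)
    _ = ∑ r ∈ R, |f r| * ∑ q ∈ Q, |g (q + (r - p))| := by
        rw [sum_comm]; simp only [mul_sum]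
    _ ≤ (∑ r ∈ R, |f r|) * B := by
        rw [sum_mul]
        exact sum_le_sum fun r _ => by gcongr; exact hB _

theorem rpow_neg_add_mul_eq_div_rpow_one_sub {m n : ℝ} (a b : ℝ) (hm : 0 < m) (hn : 0 < n) :
    m ^ (-(a + b)) * (n⁻¹ * m * n ^ a * m ^ b) = (m / n) ^ (1 - a) := by
  have hmpow : m ^ (-(a + b)) * m * m ^ b = m ^ (1 - a) := by
    rw [← Real.rpow_add_one hm.ne', ← Real.rpow_add hm]; ring_nf
  have hnpow : n⁻¹ * n ^ a = (n ^ (1 - a))⁻¹ := by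
    rw [← Real.rpow_neg hn.le, ← Real.rpow_neg_one, ← Real.rpow_add hn]; ring_nf
  rw [Real.div_rpow hm.le hn.le, div_eq_mul_inv, ← hmpow, ← hnpow]
  ring

noncomputable def firstProductTerm (γ₁ γ₂ : ℤ → ℝ) (n m : ℕ) : ℝ :=
  ∑ p ∈ Icc (-(m : ℤ)) m, ∑ q ∈ Icc (-(m : ℤ)) m,
    (n : ℝ)⁻¹ * |∑ r ∈ Icc (-(n : ℤ) + 1) ((n : ℤ) - 1),
      (1 - (|r| : ℝ) / (n : ℝ)) * γ₁ r * γ₂ (r + q - p)|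

theorem abs_one_sub_abs_div_le_one {n : ℕ} {r : ℤ} (hr : r ∈ Icc (-(n : ℤ) + 1) ((n : ℤ) - 1)) :
    |1 - (|r| : ℝ) / (n : ℝ)| ≤ 1 := by
  have hrn : |(r : ℝ)| ≤ n := by
    rw [mem_Icc] at hr
    exact_mod_cast abs_le.2 ⟨by omega, by omega⟩
  have h0 : 0 ≤ |(r : ℝ)| / n := by positivity
  have h1 : |(r : ℝ)| / n ≤ 1 := div_le_one_of_le₀ hrn n.cast_nonneg
  rw [abs_le]
  constructor <;> linarith

theorem firstProductTerm_le {γ₁ γ₂ : ℤ → ℝ} {C da db : ℝ} (hC : 0 ≤ C)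
    (hda0 : 0 < da) (hda : da ≤ 1 / 2) (hdb0 : 0 < db) (hdb : db ≤ 1 / 2)
    (hγ₁ : ∀ τ : ℤ, |γ₁ τ| ≤ C * ((|τ| : ℝ) + 1) ^ (2 * da - 1))
    (hγ₂ : ∀ τ : ℤ, |γ₂ τ| ≤ C * ((|τ| : ℝ) + 1) ^ (2 * db - 1)) (n : ℕ) {m : ℕ} (hm : 1 ≤ m) :
    firstProductTerm γ₁ γ₂ n m ≤ (n : ℝ)⁻¹ * (3 * m) *
      ((C * (2 / (2 * da)) * (2 * n) ^ (2 * da)) * (C * (2 / (2 * db)) * (3 * m) ^ (2 * db))) := by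
  have hR : ∑ r ∈ Icc (-(n : ℤ) + 1) ((n : ℤ) - 1), |γ₁ r| ≤
      C * (2 / (2 * da)) * (2 * n) ^ (2 * da) := by
    have hcard : #(Icc (-(n : ℤ) + 1) ((n : ℤ) - 1)) ≤ 2 * n := by rw [Int.card_Icc]; omega
    simpa using sum_abs_le_of_abs_le_rpow hC (by linarith) (by linarith) hγ₁ _
      (x := 2 * n) (by exact_mod_cast hcard)
  have hQ : ∀ c : ℤ, ∑ q ∈ Icc (-(m : ℤ)) m, |γ₂ (q + c)| ≤
      C * (2 / (2 * db)) * (3 * m) ^ (2 * db) := by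
    intro c
    have hcard : #((Icc (-(m : ℤ)) m).map (addRightEmbedding c)) ≤ 3 * m := by
      rw [card_map, Int.card_Icc]; omega
    have h := sum_abs_le_of_abs_le_rpow hC (by linarith) (by linarith) hγ₂ _
      (x := 3 * m) (by exact_mod_cast hcard)
    rwa [sum_map, sub_add_cancel] at h
  have hP : (#(Icc (-(m : ℤ)) m) : ℝ) ≤ 3 * m := by
    have : #(Icc (-(m : ℤ)) m) ≤ 3 * m := by rw [Int.card_Icc]; omega
    exact_mod_cast this
  calc firstProductTerm γ₁ γ₂ n m
      = (n : ℝ)⁻¹ * ∑ p ∈ Icc (-(m : ℤ)) m, ∑ q ∈ Icc (-(m : ℤ)) m,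
          |∑ r ∈ Icc (-(n : ℤ) + 1) ((n : ℤ) - 1),
            (1 - (|r| : ℝ) / (n : ℝ)) * γ₁ r * γ₂ (r + q - p)| := by
        simp only [firstProductTerm, mul_sum]
    _ ≤ (n : ℝ)⁻¹ * (#(Icc (-(m : ℤ)) m) * ((∑ r ∈ Icc (-(n : ℤ) + 1) ((n : ℤ) - 1), |γ₁ r|) *
          (C * (2 / (2 * db)) * (3 * m) ^ (2 * db)))) := by
        gcongr
        exact sum_sum_abs_sum_mul_shift_le (fun r hr => abs_one_sub_abs_div_le_one hr) hQ
    _ ≤ (n : ℝ)⁻¹ * (3 * m) * ((C * (2 / (2 * da)) * (2 * n) ^ (2 * da)) *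
          (C * (2 / (2 * db)) * (3 * m) ^ (2 * db))) := by
        rw [mul_assoc (n : ℝ)⁻¹ (3 * m)]
        gcongr _ * (?_ * (?_ * _))

theorem first_product_term_small_general (da db C : ℝ)
    (hda0 : 0 < da) (hda : da < 1 / 2) (hdb0 : 0 < db) (hdb : db < 1 / 2) (hC : 0 < C)
    (γ₁ γ₂ : ℤ → ℝ)
    (hγ₁ : ∀ τ : ℤ, |γ₁ τ| ≤ C * ((|τ| : ℝ) + 1) ^ (2 * da - 1))
    (hγ₂ : ∀ τ : ℤ, |γ₂ τ| ≤ C * ((|τ| : ℝ) + 1) ^ (2 * db - 1))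
    (M : ℕ → ℕ) (hMpos : ∀ n, 0 < M n)
    (hMn : Tendsto (fun n : ℕ => (M n : ℝ) / (n : ℝ)) atTop (nhds 0)) :
    Tendsto (fun n : ℕ => (M n : ℝ) ^ (-(2 * da + 2 * db)) *
        ∑ p ∈ Finset.Icc (-(M n : ℤ)) (M n : ℤ),
          ∑ q ∈ Finset.Icc (-(M n : ℤ)) (M n : ℤ),
            (n : ℝ)⁻¹ * |∑ r ∈ Finset.Icc (-(n : ℤ) + 1) ((n : ℤ) - 1),
              (1 - (|r| : ℝ) / (n : ℝ)) * γ₁ r * γ₂ (r + q - p)|)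
      atTop (nhds 0) := by
  set K := 3 * (C * (2 / (2 * da))) * (C * (2 / (2 * db))) * 2 ^ (2 * da) * 3 ^ (2 * db)
  have hlim : Tendsto (fun n : ℕ => K * ((M n : ℝ) / n) ^ (1 - 2 * da)) atTop (nhds 0) := by
    simpa [Real.zero_rpow (by linarith : 1 - 2 * da ≠ 0)] using
      (hMn.rpow_const (p := 1 - 2 * da) (Or.inr (by linarith))).const_mul K
  refine squeeze_zero' (Eventually.of_forall fun n => by positivity) ?_ hlim
  filter_upwards [eventually_ge_atTop 1] with n hn
  have hm : (0 : ℝ) < M n := by exact_mod_cast hMpos n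
  have hn : (0 : ℝ) < n := by exact_mod_cast hn
  calc (M n : ℝ) ^ (-(2 * da + 2 * db)) * firstProductTerm γ₁ γ₂ n (M n)
      ≤ (M n : ℝ) ^ (-(2 * da + 2 * db)) * ((n : ℝ)⁻¹ * (3 * M n) *
          ((C * (2 / (2 * da)) * (2 * n) ^ (2 * da)) *
            (C * (2 / (2 * db)) * (3 * M n) ^ (2 * db)))) := by
        gcongr
        exact firstProductTerm_le hC.le hda0 hda.le hdb0 hdb.le hγ₁ hγ₂ n (hMpos n)
    _ = K * ((M n : ℝ) ^ (-(2 * da + 2 * db)) *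
          ((n : ℝ)⁻¹ * M n * (n : ℝ) ^ (2 * da) * (M n : ℝ) ^ (2 * db))) := by
        rw [Real.mul_rpow zero_le_two hn.le, Real.mul_rpow zero_le_three hm.le]
        ring
    _ = K * ((M n : ℝ) / n) ^ (1 - 2 * da) := by
        rw [rpow_neg_add_mul_eq_div_rpow_one_sub _ _ hm hn]

/-- bound on the first product term of the covariance of sample
covariances in the proof of Lemma 1: if `|γ₁(τ)| ≤ C(|τ|+1)^{2d_a-1}`,
`|γ₂(τ)| ≤ C(|τ|+1)^{2d_b-1}` with `d_a, d_b ∈ (0,1/2)`, `M → ∞`, `M ≤ n`,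
`M/n → 0`, then
`Σ_{p=-M}^{M} Σ_{q=-M}^{M} n⁻¹ |Σ_{r=-n+1}^{n-1} (1-|r|/n) γ₁(r) γ₂(r+q-p)| = o(M^{2d_a+2d_b})`. -/
theorem first_product_term_small (da db C : ℝ)
    (hda0 : 0 < da) (hda : da < 1 / 2) (hdb0 : 0 < db) (hdb : db < 1 / 2) (hC : 0 < C)
    (γ₁ γ₂ : ℤ → ℝ)
    (hγ₁ : ∀ τ : ℤ, |γ₁ τ| ≤ C * ((|τ| : ℝ) + 1) ^ (2 * da - 1))
    (hγ₂ : ∀ τ : ℤ, |γ₂ τ| ≤ C * ((|τ| : ℝ) + 1) ^ (2 * db - 1))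
    (M : ℕ → ℕ) (hMpos : ∀ n, 0 < M n) (hM : Tendsto M atTop atTop)
    (hMle : ∀ n : ℕ, 0 < n → M n ≤ n)
    (hMn : Tendsto (fun n : ℕ => (M n : ℝ) / (n : ℝ)) atTop (nhds 0)) :
    Tendsto (fun n : ℕ => (M n : ℝ) ^ (-(2 * da + 2 * db)) *
        ∑ p ∈ Finset.Icc (-(M n : ℤ)) (M n : ℤ),
          ∑ q ∈ Finset.Icc (-(M n : ℤ)) (M n : ℤ),
            (n : ℝ)⁻¹ * |∑ r ∈ Finset.Icc (-(n : ℤ) + 1) ((n : ℤ) - 1),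
              (1 - (|r| : ℝ) / (n : ℝ)) * γ₁ r * γ₂ (r + q - p)|)
      atTop (nhds 0) :=
  first_product_term_small_general da db C hda0 hda hdb0 hdb hC γ₁ γ₂ hγ₁ hγ₂ M hMpos hMn
end

section
/- Let 0 < d_a < 1/2, 0 < d_b < 1/2 and C > 0. Let γ₁₂, γ₂₁ : ℤ → ℝ satisfy |γ₁₂(τ)| ≤ C(|τ|+1)^{d_a+d_b−1} and |γ₂₁(τ)| ≤ C(|τ|+1)^{d_a+d_b−1} for all τ. Let M = M(n) be a sequence of positive integers with M → ∞, M ≤ n and M/n → 0 as n → ∞. Then Σ_{p=−M}^{M} Σ_{q=−M}^{M} n^{−1} | Σ_{r=−n+1}^{n−1} (1 − |r|/n) γ₁₂(r+p) γ₂₁(r−q) | = o(M^{2d_a+2d_b}) as n → ∞. -/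
open Filter Finset

/-!
Bound the weights `1 - |r|/n` by `1` and both cross-covariances by `C ρ`, where
`ρ τ = (|τ| + 1) ^ (P - 1)` and `P = d_a + d_b`. Then the double sum is at most
`C² n⁻¹ Σ_r (Σ_p ρ (r + p)) (Σ_q ρ (r - q))`. Since `ρ` is even and decreasing in `|τ|`, its sum over
`L` distinct integers is at most `2 Σ_{k<L} (k + 1) ^ (P - 1) ≤ 2 L ^ P / P`. So the `q`-sum is
`O(M ^ P)` and the remaining `Σ_p Σ_r` is `O(M n ^ P)`. The whole term is therefore
`O(M ^ (1 + P) n ^ (P - 1)) = M ^ (2P) · O((M / n) ^ (1 - P))`, and `M / n → 0`.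
-/

theorem Finset.sum_le_sum_range_card_of_antitone {M : Type*} [AddCommMonoid M] [PartialOrder M]
    [IsOrderedAddMonoid M] {h : ℕ → M} (hh : Antitone h) (s : Finset ℕ) :
    ∑ k ∈ s, h k ≤ ∑ k ∈ range #s, h k := by
  classical
  refine Finset.induction_on_max s (by simp) fun a s has ih => ?_
  have ha : a ∉ s := fun h => (has a h).false
  have hcard : #s ≤ a := by
    simpa using card_le_card (fun x hx => mem_range.2 (has x hx) : s ⊆ range a)
  rw [sum_insert ha, card_insert_of_notMem ha, sum_range_succ, add_comm]
  exact add_le_add ih (hh hcard)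

theorem Finset.sum_comp_le_sum_range_card_of_antitone {ι M : Type*} [AddCommMonoid M]
    [PartialOrder M] [IsOrderedAddMonoid M] {h : ℕ → M} (hh : Antitone h) {s : Finset ι}
    {φ : ι → ℕ} (hφ : Set.InjOn φ s) :
    ∑ i ∈ s, h (φ i) ≤ ∑ k ∈ range #s, h k := by
  classical
  rw [← sum_image hφ, ← card_image_of_injOn hφ]
  exact sum_le_sum_range_card_of_antitone hh _

theorem sum_natAbs_le_two_mul_sum_range_card {ι : Type*} {h : ℕ → ℝ} (hh : Antitone h)
    (h0 : ∀ k, 0 ≤ h k) {s : Finset ι} {e : ι → ℤ} (he : Set.InjOn e s) :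
    ∑ i ∈ s, h (e i).natAbs ≤ 2 * ∑ k ∈ range #s, h k := by
  classical
  have half : ∀ t ⊆ s, Set.InjOn (fun i => (e i).natAbs) t →
      ∑ i ∈ t, h (e i).natAbs ≤ ∑ k ∈ range #s, h k := fun t hts ht =>
    (sum_comp_le_sum_range_card_of_antitone hh ht).trans <|
      sum_le_sum_of_subset_of_nonneg (range_subset_range.2 (card_le_card hts))
        fun k _ _ => h0 k
  rw [← sum_filter_add_sum_filter_not s (fun i => 0 ≤ e i), two_mul]
  refine add_le_add (half _ (filter_subset _ _) ?_) (half _ (filter_subset _ _) ?_) <;>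
  · intro i hi j hj hij
    obtain ⟨hi, hei⟩ := mem_filter.1 hi
    obtain ⟨hj, hej⟩ := mem_filter.1 hj
    exact he hi hj (by simp only at hij hei hej; omega)

theorem mul_add_one_rpow_sub_one_le {p x : ℝ} (hp0 : 0 ≤ p) (hp1 : p ≤ 1) (hx : 0 ≤ x) :
    p * (x + 1) ^ (p - 1) ≤ (x + 1) ^ p - x ^ p := by
  have hx1 : 0 < x + 1 := by linarith
  -- Bernoulli's inequality at `1 - 1 / (x + 1) = x / (x + 1)`, multiplied through by `(x + 1) ^ p`.
  have bernoulli : (1 + -(x + 1)⁻¹) ^ p ≤ 1 + p * -(x + 1)⁻¹ :=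
    rpow_one_add_le_one_add_mul_self (by simpa using inv_le_one_of_one_le₀ (by linarith)) hp0 hp1
  have hbase : 1 + -(x + 1)⁻¹ = x / (x + 1) := by field_simp; ring
  rw [hbase, Real.div_rpow hx hx1.le, div_le_iff₀ (by positivity)] at bernoulli
  have hpow : (x + 1) ^ p = (x + 1) ^ (p - 1) * (x + 1) := by
    rw [← Real.rpow_add_one hx1.ne', sub_add_cancel]
  rw [hpow] at bernoulli ⊢
  have : (x + 1) ^ (p - 1) * (x + 1) * (x + 1)⁻¹ = (x + 1) ^ (p - 1) := by field_simp
  nlinarith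

theorem sum_range_add_one_rpow_sub_one_le {p : ℝ} (hp0 : 0 < p) (hp1 : p ≤ 1) (N : ℕ) :
    ∑ k ∈ range N, ((k : ℝ) + 1) ^ (p - 1) ≤ (N : ℝ) ^ p / p := by
  rw [le_div_iff₀ hp0, sum_mul]
  calc ∑ k ∈ range N, ((k : ℝ) + 1) ^ (p - 1) * p
      ≤ ∑ k ∈ range N, ((((k + 1 : ℕ) : ℝ)) ^ p - (k : ℝ) ^ p) := by
        gcongr with k
        push_cast
        linarith [mul_add_one_rpow_sub_one_le hp0.le hp1 k.cast_nonneg]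
    _ = (N : ℝ) ^ p := by
        rw [sum_range_sub (fun k : ℕ => (k : ℝ) ^ p)]
        simp [Real.zero_rpow hp0.ne']

theorem abs_sum_mul_mul_le {ι : Type*} {s : Finset ι} {w x y g₁ g₂ : ι → ℝ} {C : ℝ}
    (hw : ∀ i ∈ s, |w i| ≤ 1) (hx : ∀ i, |x i| ≤ C * g₁ i) (hy : ∀ i, |y i| ≤ C * g₂ i) :
    |∑ i ∈ s, w i * x i * y i| ≤ C ^ 2 * ∑ i ∈ s, g₁ i * g₂ i := by
  rw [mul_sum]
  refine (abs_sum_le_sum_abs _ _).trans (sum_le_sum fun i hi => ?_)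
  rw [abs_mul, abs_mul]
  have hx0 : 0 ≤ C * g₁ i := (abs_nonneg _).trans (hx i)
  calc |w i| * |x i| * |y i| ≤ 1 * (C * g₁ i) * (C * g₂ i) :=
        mul_le_mul (mul_le_mul (hw i hi) (hx i) (abs_nonneg _) zero_le_one) (hy i)
          (abs_nonneg _) (by positivity)
    _ = C ^ 2 * (g₁ i * g₂ i) := by ring

theorem sum_sum_abs_sum_mul_le {h : ℕ → ℝ} (hh : Antitone h) (h0 : ∀ k, 0 ≤ h k) {C : ℝ}
    {a b w : ℤ → ℝ} (ha : ∀ τ, |a τ| ≤ C * h τ.natAbs) (hb : ∀ τ, |b τ| ≤ C * h τ.natAbs)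
    (I J R : Finset ℤ) (hw : ∀ r ∈ R, |w r| ≤ 1) :
    ∑ p ∈ I, ∑ q ∈ J, |∑ r ∈ R, w r * a (r + p) * b (r - q)|
      ≤ 4 * C ^ 2 * #I * (∑ k ∈ range #J, h k) * ∑ k ∈ range #R, h k := by
  set g : ℤ → ℝ := fun τ => h τ.natAbs
  have hJ : ∀ r, ∑ q ∈ J, g (r - q) ≤ 2 * ∑ k ∈ range #J, h k := fun r =>
    sum_natAbs_le_two_mul_sum_range_card hh h0 (sub_right_injective.injOn)
  have hR : ∀ p, ∑ r ∈ R, g (r + p) ≤ 2 * ∑ k ∈ range #R, h k := fun p =>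
    sum_natAbs_le_two_mul_sum_range_card hh h0 (add_left_injective p).injOn
  calc ∑ p ∈ I, ∑ q ∈ J, |∑ r ∈ R, w r * a (r + p) * b (r - q)|
      ≤ ∑ p ∈ I, ∑ q ∈ J, C ^ 2 * ∑ r ∈ R, g (r + p) * g (r - q) := by
        gcongr with p _ q _
        exact abs_sum_mul_mul_le hw (fun r => ha _) (fun r => hb _)
    _ = C ^ 2 * ∑ p ∈ I, ∑ r ∈ R, g (r + p) * ∑ q ∈ J, g (r - q) := by
        simp_rw [mul_sum]
        exact sum_congr rfl fun p _ => sum_comm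
    _ ≤ C ^ 2 * ∑ p ∈ I, ∑ r ∈ R, g (r + p) * (2 * ∑ k ∈ range #J, h k) := by
        gcongr with p _ r _
        · exact h0 _
        · exact hJ r
    _ = C ^ 2 * (2 * ∑ k ∈ range #J, h k) * ∑ p ∈ I, ∑ r ∈ R, g (r + p) := by
        simp only [← sum_mul]; ring
    _ ≤ C ^ 2 * (2 * ∑ k ∈ range #J, h k) * ∑ p ∈ I, 2 * ∑ k ∈ range #R, h k := by
        have := sum_nonneg fun k (_ : k ∈ range #J) => h0 k
        exact mul_le_mul_of_nonneg_left (sum_le_sum fun p _ => hR p) (by positivity)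
    _ = 4 * C ^ 2 * #I * (∑ k ∈ range #J, h k) * ∑ k ∈ range #R, h k := by
        rw [sum_const, nsmul_eq_mul]; ring

theorem abs_one_sub_div_le_one {x y : ℝ} (hx : 0 ≤ x) (hxy : x ≤ y) : |1 - x / y| ≤ 1 := by
  have h1 : x / y ≤ 1 := div_le_one_of_le₀ hxy (hx.trans hxy)
  have h0 : 0 ≤ x / y := div_nonneg hx (hx.trans hxy)
  rw [abs_le]
  constructor <;> linarith

theorem sum_sum_inv_mul_abs_sum_le {P C : ℝ} (hP0 : 0 < P) (hP1 : P ≤ 1)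
    {a b : ℤ → ℝ} (ha : ∀ τ : ℤ, |a τ| ≤ C * (|(τ : ℝ)| + 1) ^ (P - 1))
    (hb : ∀ τ : ℤ, |b τ| ≤ C * (|(τ : ℝ)| + 1) ^ (P - 1)) {m N : ℕ} (hm : 1 ≤ m) (hN : 1 ≤ N) :
    ∑ p ∈ Icc (-(m : ℤ)) m, ∑ q ∈ Icc (-(m : ℤ)) m,
        (N : ℝ)⁻¹ * |∑ r ∈ Icc (-(N : ℤ) + 1) (N - 1),
          (1 - (|r| : ℝ) / N) * a (r + p) * b (r - q)|
      ≤ (N : ℝ)⁻¹ * (4 * C ^ 2 * (3 * m) * ((3 * m) ^ P / P) * ((2 * N) ^ P / P)) := by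
  set h : ℕ → ℝ := fun k => ((k : ℝ) + 1) ^ (P - 1)
  have hh : Antitone h := fun k l hkl =>
    Real.rpow_le_rpow_of_nonpos (by positivity) (by gcongr) (by linarith)
  have h0 : ∀ k, 0 ≤ h k := fun k => by positivity
  have habs : ∀ τ : ℤ, |(τ : ℝ)| = (τ.natAbs : ℝ) := fun τ => by
    rw [Nat.cast_natAbs, Int.cast_abs]
  have hw : ∀ r ∈ Icc (-(N : ℤ) + 1) (N - 1), |1 - (|r| : ℝ) / N| ≤ 1 := by
    intro r hr
    rw [mem_Icc] at hr
    refine abs_one_sub_div_le_one (abs_nonneg _) ?_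
    rw [abs_le]; constructor <;> exact_mod_cast (by omega)
  have key := sum_sum_abs_sum_mul_le hh h0
    (fun τ => by simpa only [habs] using ha τ) (fun τ => by simpa only [habs] using hb τ)
    (Icc (-(m : ℤ)) m) (Icc (-(m : ℤ)) m) _ hw
  have hcardI : (#(Icc (-(m : ℤ)) m) : ℝ) ≤ 3 * m := by
    rw [Int.card_Icc, show ((m : ℤ) + 1 - -(m : ℤ)).toNat = 2 * m + 1 by omega]
    push_cast; linarith [(show (1 : ℝ) ≤ m by exact_mod_cast hm)]
  have hSI : ∑ k ∈ range #(Icc (-(m : ℤ)) m), h k ≤ (3 * m) ^ P / P := by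
    refine (sum_range_add_one_rpow_sub_one_le hP0 hP1 _).trans ?_
    gcongr
  have hSR : ∑ k ∈ range #(Icc (-(N : ℤ) + 1) (N - 1)), h k ≤ (2 * N) ^ P / P := by
    refine (sum_range_add_one_rpow_sub_one_le hP0 hP1 _).trans ?_
    rw [Int.card_Icc, show ((N : ℤ) - 1 + 1 - (-(N : ℤ) + 1)).toNat = 2 * N - 1 by omega]
    gcongr
    push_cast [Nat.cast_sub (by omega : 1 ≤ 2 * N)]
    linarith
  have hSI0 : 0 ≤ ∑ k ∈ range #(Icc (-(m : ℤ)) m), h k := sum_nonneg fun k _ => h0 k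
  have hSR0 : 0 ≤ ∑ k ∈ range #(Icc (-(N : ℤ) + 1) (N - 1)), h k := sum_nonneg fun k _ => h0 k
  simp only [← mul_sum]
  exact mul_le_mul_of_nonneg_left (key.trans (by gcongr)) (by positivity)

theorem rpow_mul_sum_sum_inv_mul_abs_sum_le {P C : ℝ} (hP0 : 0 < P) (hP1 : P ≤ 1)
    {a b : ℤ → ℝ} (ha : ∀ τ : ℤ, |a τ| ≤ C * (|(τ : ℝ)| + 1) ^ (P - 1))
    (hb : ∀ τ : ℤ, |b τ| ≤ C * (|(τ : ℝ)| + 1) ^ (P - 1)) {m N : ℕ} (hm : 1 ≤ m) (hN : 1 ≤ N) :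
    (m : ℝ) ^ (-(2 * P)) *
        ∑ p ∈ Icc (-(m : ℤ)) m, ∑ q ∈ Icc (-(m : ℤ)) m,
          (N : ℝ)⁻¹ * |∑ r ∈ Icc (-(N : ℤ) + 1) (N - 1),
            (1 - (|r| : ℝ) / N) * a (r + p) * b (r - q)|
      ≤ 12 * 3 ^ P * 2 ^ P * C ^ 2 / P ^ 2 * ((m : ℝ) / N) ^ (1 - P) := by
  have hm0 : (0 : ℝ) < m := by exact_mod_cast hm
  have hN0 : (0 : ℝ) < N := by exact_mod_cast hN
  have hpowm : (m : ℝ) ^ (-(2 * P)) = ((m : ℝ) ^ P)⁻¹ * ((m : ℝ) ^ P)⁻¹ := by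
    rw [Real.rpow_neg hm0.le, two_mul, Real.rpow_add hm0, mul_inv]
  have hratio : ((m : ℝ) / N) ^ (1 - P) = m / m ^ P * (N ^ P / N) := by
    rw [Real.div_rpow hm0.le hN0.le, Real.rpow_sub hm0, Real.rpow_sub hN0, Real.rpow_one,
      Real.rpow_one]
    field_simp
  calc _ ≤ (m : ℝ) ^ (-(2 * P)) *
        ((N : ℝ)⁻¹ * (4 * C ^ 2 * (3 * m) * ((3 * m) ^ P / P) * ((2 * N) ^ P / P))) :=
        mul_le_mul_of_nonneg_left (sum_sum_inv_mul_abs_sum_le hP0 hP1 ha hb hm hN)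
          (by positivity)
    _ = _ := by
        rw [hpowm, hratio, Real.mul_rpow (by norm_num) hm0.le, Real.mul_rpow (by norm_num) hN0.le]
        field_simp
        ring

theorem second_product_term_small_general (da db C : ℝ)
    (hda0 : 0 < da) (hda : da < 1 / 2) (hdb0 : 0 < db) (hdb : db < 1 / 2)
    (γ₁₂ γ₂₁ : ℤ → ℝ)
    (hγ₁₂ : ∀ τ : ℤ, |γ₁₂ τ| ≤ C * ((|τ| : ℝ) + 1) ^ (da + db - 1))
    (hγ₂₁ : ∀ τ : ℤ, |γ₂₁ τ| ≤ C * ((|τ| : ℝ) + 1) ^ (da + db - 1))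
    (M : ℕ → ℕ) (hMpos : ∀ n, 0 < M n)
    (hMn : Tendsto (fun n : ℕ => (M n : ℝ) / (n : ℝ)) atTop (nhds 0)) :
    Tendsto (fun n : ℕ => (M n : ℝ) ^ (-(2 * da + 2 * db)) *
        ∑ p ∈ Finset.Icc (-(M n : ℤ)) (M n : ℤ),
          ∑ q ∈ Finset.Icc (-(M n : ℤ)) (M n : ℤ),
            (n : ℝ)⁻¹ * |∑ r ∈ Finset.Icc (-(n : ℤ) + 1) ((n : ℤ) - 1),
              (1 - (|r| : ℝ) / (n : ℝ)) * γ₁₂ (r + p) * γ₂₁ (r - q)|)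
      atTop (nhds 0) := by
  have hP0 : 0 < da + db := by linarith
  have hP1 : da + db < 1 := by linarith
  have hbound : Tendsto (fun n : ℕ => 12 * 3 ^ (da + db) * 2 ^ (da + db) * C ^ 2 / (da + db) ^ 2 *
      ((M n : ℝ) / n) ^ (1 - (da + db))) atTop (nhds 0) := by
    simpa [Real.zero_rpow (sub_pos.2 hP1).ne'] using
      (hMn.rpow_const (Or.inr (sub_pos.2 hP1).le)).const_mul
        (12 * 3 ^ (da + db) * 2 ^ (da + db) * C ^ 2 / (da + db) ^ 2)
  refine squeeze_zero' (Eventually.of_forall fun n => by positivity) ?_ hbound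
  filter_upwards [eventually_ge_atTop 1] with n hn
  rw [show -(2 * da + 2 * db) = -(2 * (da + db)) by ring]
  exact rpow_mul_sum_sum_inv_mul_abs_sum_le hP0 hP1.le hγ₁₂ hγ₂₁ (hMpos n) hn

/-- bound on the second product term of the covariance of sample
covariances in the proof of Lemma 1: if `|γ₁₂(τ)|, |γ₂₁(τ)| ≤ C(|τ|+1)^{d_a+d_b-1}`
with `d_a, d_b ∈ (0,1/2)`, `M → ∞`, `M ≤ n`, `M/n → 0`, then
`Σ_{p=-M}^{M} Σ_{q=-M}^{M} n⁻¹ |Σ_{r=-n+1}^{n-1} (1-|r|/n) γ₁₂(r+p) γ₂₁(r-q)| = o(M^{2d_a+2d_b})`. -/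
theorem second_product_term_small (da db C : ℝ)
    (hda0 : 0 < da) (hda : da < 1 / 2) (hdb0 : 0 < db) (hdb : db < 1 / 2) (hC : 0 < C)
    (γ₁₂ γ₂₁ : ℤ → ℝ)
    (hγ₁₂ : ∀ τ : ℤ, |γ₁₂ τ| ≤ C * ((|τ| : ℝ) + 1) ^ (da + db - 1))
    (hγ₂₁ : ∀ τ : ℤ, |γ₂₁ τ| ≤ C * ((|τ| : ℝ) + 1) ^ (da + db - 1))
    (M : ℕ → ℕ) (hMpos : ∀ n, 0 < M n) (hM : Tendsto M atTop atTop)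
    (hMle : ∀ n : ℕ, 0 < n → M n ≤ n)
    (hMn : Tendsto (fun n : ℕ => (M n : ℝ) / (n : ℝ)) atTop (nhds 0)) :
    Tendsto (fun n : ℕ => (M n : ℝ) ^ (-(2 * da + 2 * db)) *
        ∑ p ∈ Finset.Icc (-(M n : ℤ)) (M n : ℤ),
          ∑ q ∈ Finset.Icc (-(M n : ℤ)) (M n : ℤ),
            (n : ℝ)⁻¹ * |∑ r ∈ Finset.Icc (-(n : ℤ) + 1) ((n : ℤ) - 1),
              (1 - (|r| : ℝ) / (n : ℝ)) * γ₁₂ (r + p) * γ₂₁ (r - q)|)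
      atTop (nhds 0) :=
  second_product_term_small_general da db C hda0 hda hdb0 hdb γ₁₂ γ₂₁ hγ₁₂ hγ₂₁ M hMpos hMn
end

section
/- Let 1/4 < d_x < 1/2, 0 ≤ d_ε < 1/2 and let k̃_0 ≥ 2 be an integer with k̃_0(2d_ε−1) > −1. Let M = M(n) be a sequence of positive integers with M → ∞, M ≤ n and M^{max(3, k̃_0−2)}/n → 0 as n → ∞. Then n^{−1} Σ_{p=−M}^{M} Σ_{q=−M}^{M} Σ_{r=−n+1}^{n−1} [ (|p|+1)^{d_x+d_ε−1}(|q|+1)^{d_x+d_ε−1}(|r|+1)^{2d_x−1}(|r+q−p|+1)^{(k̃_0−1)(2d_ε−1)} + (|p|+1)^{d_x+d_ε−1}(|q|+1)^{d_x+d_ε−1}(|r+q|+1)^{d_x+d_ε−1}(|r−p|+1)^{d_x+d_ε−1}(|r+q−p|+1)^{(k̃_0−2)(2d_ε−1)} + (|r|+1)^{2d_x−1}(|r−p|+1)^{d_x+d_ε−1}(|r+q|+1)^{d_x+d_ε−1}(|r+q−p|+1)^{(k̃_0−1)(2d_ε−1)} ] = o(M^{(4d_x−1) + (k̃_0(2d_ε−1)+1)})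 as n → ∞. -/
open Filter Finset

/-!
Each diagram is a product of nonpositive powers of `|·| + 1`. The factors in `p` and `q` are at
most `1`, and each factor in `r` is at most the same power of the smallest base `m` among
`|r| + 1`, `|r + q| + 1`, `|r - p| + 1`, `|r + q - p| + 1`; since the exponents of every diagram
add up to at most `w = (2d_x - 1) + (k̃₀ - 1)(2d_ε - 1)`, the summand is at most `3 m ^ w`, hence
at most three times the sum of the four shifted weights `(|r + σ| + 1) ^ w`. By concavity of
`t ↦ t ^ s`, `∑_{|r| ≤ K} (|r| + 1) ^ (s - 1) ≤ 2 (K + 1) ^ s / s`. With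
`α = (4d_x - 1) + (k̃₀(2d_ε - 1) + 1)` and `s = (1 + α) / 3` one has `w ≤ s - 1`, so the
normalised sum is `O(M ^ (2 - α) n ^ (s - 1)) = O((M ^ 3 / n) ^ ((2 - α) / 3))`.
-/

lemma mul_rpow_sub_one_le_rpow_sub_rpow {y s : ℝ} (hy : 1 ≤ y) (hs0 : 0 ≤ s) (hs1 : s ≤ 1) :
    s * y ^ (s - 1) ≤ y ^ s - (y - 1) ^ s := by
  have hy0 : 0 < y := by linarith
  have hbern := rpow_one_add_le_one_add_mul_self (s := -y⁻¹)
    (by rw [neg_le_neg_iff]; exact inv_le_one_of_one_le₀ hy) hs0 hs1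
  have hsplit : (y - 1) ^ s = y ^ s * (1 + -y⁻¹) ^ s := by
    rw [← Real.mul_rpow hy0.le (by simpa using inv_le_one_of_one_le₀ hy)]
    congr 1
    field_simp
    ring
  rw [hsplit, Real.rpow_sub hy0, Real.rpow_one, div_eq_mul_inv]
  nlinarith [mul_le_mul_of_nonneg_left hbern (Real.rpow_nonneg hy0.le s)]

lemma sum_Icc_abs_add_one_rpow_le {s : ℝ} (hs0 : 0 < s) (hs1 : s ≤ 1) (N : ℕ) :
    ∑ m ∈ Icc (-(N : ℤ)) N, (|(m : ℝ)| + 1) ^ (s - 1) ≤ 2 / s * ((N : ℝ) + 1) ^ s := by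
  induction N with
  | zero =>
    simp only [Nat.cast_zero, neg_zero, Icc_self, sum_singleton, Int.cast_zero, abs_zero,
      zero_add, Real.one_rpow, mul_one]
    rw [le_div_iff₀ hs0]
    linarith
  | succ N ih =>
    have hIcc : Icc (-((N + 1 : ℕ) : ℤ)) ((N + 1 : ℕ) : ℤ)
        = insert (-((N : ℤ) + 1)) (insert ((N : ℤ) + 1) (Icc (-(N : ℤ)) N)) := by
      ext x
      simp only [mem_Icc, mem_insert]
      omega
    rw [hIcc, sum_insert (by simp only [mem_insert, mem_Icc]; omega),
      sum_insert (by simp only [mem_Icc]; omega)]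
    push_cast
    rw [abs_neg, abs_of_nonneg (by positivity)]
    have hstep := mul_rpow_sub_one_le_rpow_sub_rpow (y := (N : ℝ) + 1 + 1)
      (by linarith [N.cast_nonneg (α := ℝ)]) hs0.le hs1
    rw [add_sub_cancel_right, ← le_div_iff₀' hs0] at hstep
    have hsplit : 2 / s * ((N : ℝ) + 1 + 1) ^ s
        = 2 / s * ((N : ℝ) + 1) ^ s + 2 * ((((N : ℝ) + 1 + 1) ^ s - ((N : ℝ) + 1) ^ s) / s) := by
      ring
    linarith

lemma sum_Icc_abs_add_rpow_le {s : ℝ} (hs0 : 0 < s) (hs1 : s ≤ 1) {w : ℝ} (hw : w ≤ s - 1)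
    {n : ℕ} (hn : 1 ≤ n) {σ : ℤ} (hσ : |σ| ≤ 2 * n) :
    ∑ r ∈ Icc (-(n : ℤ) + 1) (n - 1), (|(r : ℝ) + σ| + 1) ^ w ≤ 8 / s * (n : ℝ) ^ s := by
  obtain ⟨hσ₁, hσ₂⟩ := abs_le.mp hσ
  have hn' : (1 : ℝ) ≤ n := by exact_mod_cast hn
  calc ∑ r ∈ Icc (-(n : ℤ) + 1) (n - 1), (|(r : ℝ) + σ| + 1) ^ w
      = ∑ m ∈ Icc (-(n : ℤ) + 1 + σ) (n - 1 + σ), (|(m : ℝ)| + 1) ^ w := by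
        rw [← map_add_right_Icc, sum_map]
        simp only [addRightEmbedding_apply, Int.cast_add]
    _ ≤ ∑ m ∈ Icc (-((3 * n : ℕ) : ℤ)) ((3 * n : ℕ) : ℤ), (|(m : ℝ)| + 1) ^ (s - 1) := by
        refine sum_le_sum_of_subset_of_nonneg (fun m hm ↦ ?_) (fun _ _ _ ↦ by positivity)
          |>.trans (sum_le_sum fun m _ ↦ Real.rpow_le_rpow_of_exponent_le ?_ hw)
        · simp only [mem_Icc] at hm ⊢
          push_cast
          omega
        · linarith [abs_nonneg (m : ℝ)]
    _ ≤ 2 / s * ((3 * n : ℕ) + 1 : ℝ) ^ s := sum_Icc_abs_add_one_rpow_le hs0 hs1 _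
    _ ≤ 2 / s * (4 * (n : ℝ) ^ s) := by
        gcongr
        calc ((3 * n : ℕ) + 1 : ℝ) ^ s ≤ (4 * n : ℝ) ^ s := by gcongr; push_cast; linarith
          _ = (4 : ℝ) ^ s * (n : ℝ) ^ s := Real.mul_rpow (by norm_num) (by positivity)
          _ ≤ 4 * (n : ℝ) ^ s := by
            gcongr
            simpa using Real.rpow_le_rpow_of_exponent_le (by norm_num : (1 : ℝ) ≤ 4) hs1
    _ = 8 / s * (n : ℝ) ^ s := by ring

lemma rpow_min_le_add_rpow {x y : ℝ} (hx : 0 ≤ x) (hy : 0 ≤ y) (z : ℝ) :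
    min x y ^ z ≤ x ^ z + y ^ z := by
  rcases min_choice x y with h | h <;> rw [h]
  · linarith [Real.rpow_nonneg hy z]
  · linarith [Real.rpow_nonneg hx z]

/-- The three connected diagrams of `cum{H₂(x_s), H_k(ε_{s+p}), H₂(x_{s+r}), H_k(ε_{s+r+q})}`,
with every covariance replaced by its power-law envelope. -/
noncomputable def cumulantDiagramSum (dx dε : ℝ) (k : ℕ) (p q r : ℤ) : ℝ :=
  ((|p| : ℝ) + 1) ^ (dx + dε - 1) * ((|q| : ℝ) + 1) ^ (dx + dε - 1) *
      ((|r| : ℝ) + 1) ^ (2 * dx - 1) *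
      ((|r + q - p| : ℝ) + 1) ^ (((k : ℝ) - 1) * (2 * dε - 1)) +
    ((|p| : ℝ) + 1) ^ (dx + dε - 1) * ((|q| : ℝ) + 1) ^ (dx + dε - 1) *
      ((|r + q| : ℝ) + 1) ^ (dx + dε - 1) *
      ((|r - p| : ℝ) + 1) ^ (dx + dε - 1) *
      ((|r + q - p| : ℝ) + 1) ^ (((k : ℝ) - 2) * (2 * dε - 1)) +
    ((|r| : ℝ) + 1) ^ (2 * dx - 1) *
      ((|r - p| : ℝ) + 1) ^ (dx + dε - 1) *
      ((|r + q| : ℝ) + 1) ^ (dx + dε - 1) *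
      ((|r + q - p| : ℝ) + 1) ^ (((k : ℝ) - 1) * (2 * dε - 1))

lemma cumulantDiagramSum_le {dx dε w : ℝ} {k : ℕ} (hdx : dx ≤ 1 / 2) (hdε : dε ≤ 1 / 2)
    (hk : 2 ≤ k) (hw : 2 * dx - 1 + ((k : ℝ) - 1) * (2 * dε - 1) ≤ w) (p q r : ℤ) :
    cumulantDiagramSum dx dε k p q r ≤
      3 * ((|(r : ℝ)| + 1) ^ w + (|(r : ℝ) + q| + 1) ^ w + (|(r : ℝ) - p| + 1) ^ w +
        (|(r : ℝ) + q - p| + 1) ^ w) := by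
  have hk' : (2 : ℝ) ≤ k := by exact_mod_cast hk
  have ha : dx + dε - 1 ≤ 0 := by linarith
  have hb : 2 * dx - 1 ≤ 0 := by linarith
  have hc : ((k : ℝ) - 1) * (2 * dε - 1) ≤ 0 :=
    mul_nonpos_of_nonneg_of_nonpos (by linarith) (by linarith)
  have hc' : ((k : ℝ) - 2) * (2 * dε - 1) ≤ 0 :=
    mul_nonpos_of_nonneg_of_nonpos (by linarith) (by linarith)
  have one_le : ∀ x : ℝ, 1 ≤ |x| + 1 := fun x ↦ by linarith [abs_nonneg x]
  set A₀ := |(r : ℝ)| + 1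
  set A₁ := |(r : ℝ) + q| + 1
  set A₂ := |(r : ℝ) - p| + 1
  set A₃ := |(r : ℝ) + q - p| + 1
  set m := min (min A₀ A₁) (min A₂ A₃)
  have hm1 : 1 ≤ m := le_min (le_min (one_le _) (one_le _)) (le_min (one_le _) (one_le _))
  have h₀ : m ≤ A₀ := (min_le_left _ _).trans (min_le_left _ _)
  have h₁ : m ≤ A₁ := (min_le_left _ _).trans (min_le_right _ _)
  have h₂ : m ≤ A₂ := (min_le_right _ _).trans (min_le_left _ _)
  have h₃ : m ≤ A₃ := (min_le_right _ _).trans (min_le_right _ _)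
  have le_one : ∀ {x u : ℝ}, u ≤ 0 → (|x| + 1) ^ u ≤ 1 :=
    fun hu ↦ Real.rpow_le_one_of_one_le_of_nonpos (one_le _) hu
  have le_m : ∀ {X u : ℝ}, m ≤ X → u ≤ 0 → X ^ u ≤ m ^ u :=
    fun h hu ↦ Real.rpow_le_rpow_of_nonpos (by linarith) h hu
  have mul_m : ∀ u v : ℝ, m ^ u * m ^ v = m ^ (u + v) :=
    fun u v ↦ (Real.rpow_add (by linarith) u v).symm
  have m_le : ∀ {u : ℝ}, u ≤ w → m ^ u ≤ m ^ w :=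
    fun h ↦ Real.rpow_le_rpow_of_exponent_le hm1 h
  have t₁ : ((|p| : ℝ) + 1) ^ (dx + dε - 1) * ((|q| : ℝ) + 1) ^ (dx + dε - 1) *
      A₀ ^ (2 * dx - 1) * A₃ ^ (((k : ℝ) - 1) * (2 * dε - 1)) ≤ m ^ w := by
    calc _ ≤ 1 * 1 * m ^ (2 * dx - 1) * m ^ (((k : ℝ) - 1) * (2 * dε - 1)) := by
          gcongr ?_ * ?_ * ?_ * ?_
          exacts [le_one ha, le_one ha, le_m h₀ hb, le_m h₃ hc]
      _ ≤ m ^ w := by rw [one_mul, one_mul, mul_m]; exact m_le (by linarith)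
  have t₂ : ((|p| : ℝ) + 1) ^ (dx + dε - 1) * ((|q| : ℝ) + 1) ^ (dx + dε - 1) *
      A₁ ^ (dx + dε - 1) * A₂ ^ (dx + dε - 1) * A₃ ^ (((k : ℝ) - 2) * (2 * dε - 1)) ≤ m ^ w := by
    calc _ ≤ 1 * 1 * m ^ (dx + dε - 1) * m ^ (dx + dε - 1) *
          m ^ (((k : ℝ) - 2) * (2 * dε - 1)) := by
          gcongr ?_ * ?_ * ?_ * ?_ * ?_
          exacts [le_one ha, le_one ha, le_m h₁ ha, le_m h₂ ha, le_m h₃ hc']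
      _ ≤ m ^ w := by rw [one_mul, one_mul, mul_m, mul_m]; exact m_le (by linarith)
  have t₃ : A₀ ^ (2 * dx - 1) * A₂ ^ (dx + dε - 1) * A₁ ^ (dx + dε - 1) *
      A₃ ^ (((k : ℝ) - 1) * (2 * dε - 1)) ≤ m ^ w := by
    calc _ ≤ m ^ (2 * dx - 1) * m ^ (dx + dε - 1) * m ^ (dx + dε - 1) *
          m ^ (((k : ℝ) - 1) * (2 * dε - 1)) := by
          gcongr ?_ * ?_ * ?_ * ?_
          exacts [le_m h₀ hb, le_m h₂ ha, le_m h₁ ha, le_m h₃ hc]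
      _ ≤ m ^ w := by rw [mul_m, mul_m, mul_m]; exact m_le (by linarith)
  have hmw : m ^ w ≤ A₀ ^ w + A₁ ^ w + A₂ ^ w + A₃ ^ w := by
    have hA : ∀ x : ℝ, 0 ≤ |x| + 1 := fun x ↦ by linarith [one_le x]
    calc m ^ w ≤ min A₀ A₁ ^ w + min A₂ A₃ ^ w :=
          rpow_min_le_add_rpow (le_min (hA _) (hA _)) (le_min (hA _) (hA _)) w
      _ ≤ (A₀ ^ w + A₁ ^ w) + (A₂ ^ w + A₃ ^ w) :=
          add_le_add (rpow_min_le_add_rpow (hA _) (hA _) w)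
            (rpow_min_le_add_rpow (hA _) (hA _) w)
      _ = A₀ ^ w + A₁ ^ w + A₂ ^ w + A₃ ^ w := by ring
  unfold cumulantDiagramSum
  linarith

lemma sum_cumulantDiagramSum_le {dx dε s : ℝ} {k M n : ℕ} (hdx : dx ≤ 1 / 2)
    (hdε : dε ≤ 1 / 2) (hk : 2 ≤ k) (hs0 : 0 < s) (hs1 : s ≤ 1)
    (hw : 2 * dx - 1 + ((k : ℝ) - 1) * (2 * dε - 1) ≤ s - 1)
    (hM : 1 ≤ M) (hMn : M ≤ n) :
    ∑ p ∈ Icc (-(M : ℤ)) M, ∑ q ∈ Icc (-(M : ℤ)) M, ∑ r ∈ Icc (-(n : ℤ) + 1) (n - 1),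
        cumulantDiagramSum dx dε k p q r ≤ 864 / s * ((M : ℝ) ^ 2 * (n : ℝ) ^ s) := by
  have hinner : ∀ p ∈ Icc (-(M : ℤ)) M, ∀ q ∈ Icc (-(M : ℤ)) M,
      ∑ r ∈ Icc (-(n : ℤ) + 1) (n - 1), cumulantDiagramSum dx dε k p q r ≤ 96 / s * n ^ s := by
    intro p hp q hq
    rw [mem_Icc] at hp hq
    have hbound : ∀ σ : ℤ, -(2 * n : ℤ) ≤ σ → σ ≤ 2 * n →
        ∑ r ∈ Icc (-(n : ℤ) + 1) (n - 1), (|(r : ℝ) + σ| + 1) ^ (s - 1) ≤ 8 / s * (n : ℝ) ^ s :=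
      fun σ h₁ h₂ ↦ sum_Icc_abs_add_rpow_le hs0 hs1 le_rfl (hM.trans hMn)
        (abs_le.mpr ⟨by omega, by omega⟩)
    calc _ ≤ ∑ r ∈ Icc (-(n : ℤ) + 1) (n - 1),
          3 * ((|(r : ℝ)| + 1) ^ (s - 1) + (|(r : ℝ) + q| + 1) ^ (s - 1) +
            (|(r : ℝ) - p| + 1) ^ (s - 1) + (|(r : ℝ) + q - p| + 1) ^ (s - 1)) :=
          sum_le_sum fun r _ ↦ cumulantDiagramSum_le hdx hdε hk hw p q r
      _ ≤ 3 * (8 / s * n ^ s + 8 / s * n ^ s + 8 / s * n ^ s + 8 / s * n ^ s) := by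
          simp only [← mul_sum, sum_add_distrib]
          gcongr
          · simpa using hbound 0 (by omega) (by omega)
          · exact hbound q (by omega) (by omega)
          · simpa [sub_eq_add_neg] using hbound (-p) (by omega) (by omega)
          · simpa [add_sub_assoc] using hbound (q - p) (by omega) (by omega)
      _ = 96 / s * n ^ s := by ring
  have hcard : ((Icc (-(M : ℤ)) M).card : ℝ) ≤ 3 * M := by
    rw [Int.card_Icc]
    norm_cast
    omega
  calc _ ≤ ∑ _p ∈ Icc (-(M : ℤ)) M, ∑ _q ∈ Icc (-(M : ℤ)) M, 96 / s * (n : ℝ) ^ s :=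
        sum_le_sum fun p hp ↦ sum_le_sum fun q hq ↦ hinner p hp q hq
    _ = (Icc (-(M : ℤ)) M).card * ((Icc (-(M : ℤ)) M).card * (96 / s * (n : ℝ) ^ s)) := by
        simp only [sum_const, nsmul_eq_mul]
    _ ≤ (3 * M) * ((3 * M) * (96 / s * (n : ℝ) ^ s)) := by gcongr
    _ = 864 / s * ((M : ℝ) ^ 2 * (n : ℝ) ^ s) := by ring

lemma rpow_neg_mul_inv_mul_eq {x y α : ℝ} (hx : 0 < x) (hy : 0 < y) :
    x ^ (-α) * (y⁻¹ * (x ^ 2 * y ^ ((1 + α) / 3))) = (x ^ 3 / y) ^ ((2 - α) / 3) := by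
  have hx' : x ^ (-α) * x ^ 2 = (x ^ 3) ^ ((2 - α) / 3) := by
    rw [← Real.rpow_natCast, ← Real.rpow_natCast, ← Real.rpow_add hx, ← Real.rpow_mul hx.le]
    congr 1; push_cast; ring
  have hy' : y⁻¹ * y ^ ((1 + α) / 3) = (y ^ ((2 - α) / 3))⁻¹ := by
    rw [← Real.rpow_neg_one, ← Real.rpow_add hy, ← Real.rpow_neg hy.le]; congr 1; ring
  calc _ = (x ^ (-α) * x ^ 2) * (y⁻¹ * y ^ ((1 + α) / 3)) := by ring
    _ = _ := by rw [hx', hy', Real.div_rpow (by positivity) hy.le, ← div_eq_mul_inv]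

theorem partII_cumulant_bound_general (dx dε : ℝ)
    (hdx0 : 1 / 4 < dx) (hdx : dx < 1 / 2) (hdε : dε < 1 / 2)
    (ktil0 : ℕ) (hktil0 : 2 ≤ ktil0) (hlm : (-1 : ℝ) < (ktil0 : ℝ) * (2 * dε - 1))
    (M : ℕ → ℕ) (hMpos : ∀ n, 0 < M n)
    (hMle : ∀ n : ℕ, 0 < n → M n ≤ n)
    (hMn : Tendsto (fun n : ℕ => (M n : ℝ) ^ (max 3 (ktil0 - 2)) / (n : ℝ))
      atTop (nhds 0)) :
    Tendsto (fun n : ℕ =>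
        (M n : ℝ) ^ (-((4 * dx - 1) + ((ktil0 : ℝ) * (2 * dε - 1) + 1))) *
          ((n : ℝ)⁻¹ *
            ∑ p ∈ Finset.Icc (-(M n : ℤ)) (M n : ℤ),
              ∑ q ∈ Finset.Icc (-(M n : ℤ)) (M n : ℤ),
                ∑ r ∈ Finset.Icc (-(n : ℤ) + 1) ((n : ℤ) - 1),
                  (((|p| : ℝ) + 1) ^ (dx + dε - 1) * ((|q| : ℝ) + 1) ^ (dx + dε - 1) *
                      ((|r| : ℝ) + 1) ^ (2 * dx - 1) *
                      ((|r + q - p| : ℝ) + 1) ^ (((ktil0 : ℝ) - 1) * (2 * dε - 1)) +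
                    ((|p| : ℝ) + 1) ^ (dx + dε - 1) * ((|q| : ℝ) + 1) ^ (dx + dε - 1) *
                      ((|r + q| : ℝ) + 1) ^ (dx + dε - 1) *
                      ((|r - p| : ℝ) + 1) ^ (dx + dε - 1) *
                      ((|r + q - p| : ℝ) + 1) ^ (((ktil0 : ℝ) - 2) * (2 * dε - 1)) +
                    ((|r| : ℝ) + 1) ^ (2 * dx - 1) *
                      ((|r - p| : ℝ) + 1) ^ (dx + dε - 1) *
                      ((|r + q| : ℝ) + 1) ^ (dx + dε - 1) *
                      ((|r + q - p| : ℝ) + 1) ^ (((ktil0 : ℝ) - 1) * (2 * dε - 1)))))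
      atTop (nhds 0) := by
  set α := (4 * dx - 1) + ((ktil0 : ℝ) * (2 * dε - 1) + 1)
  have hk : (2 : ℝ) ≤ ktil0 := by exact_mod_cast hktil0
  have hke : (ktil0 : ℝ) * (2 * dε - 1) ≤ 0 :=
    mul_nonpos_of_nonneg_of_nonpos (by linarith) (by linarith)
  have hexp : ((2 * ktil0 : ℝ) - 3) * (2 * dε - 1) ≤ 0 :=
    mul_nonpos_of_nonneg_of_nonpos (by linarith) (by linarith)
  have hα : 0 < (2 - α) / 3 := by linarith
  have hs : 0 < (1 + α) / 3 := by linarith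
  have hM3 : Tendsto (fun n : ℕ ↦ (M n : ℝ) ^ 3 / n) atTop (nhds 0) := by
    refine squeeze_zero (fun n ↦ by positivity) (fun n ↦ ?_) hMn
    gcongr
    exacts [by exact_mod_cast hMpos n, le_max_left _ _]
  have hlim : Tendsto (fun n : ℕ ↦ 864 / ((1 + α) / 3) * ((M n : ℝ) ^ 3 / n) ^ ((2 - α) / 3))
      atTop (nhds 0) := by
    simpa [Real.zero_rpow hα.ne'] using (hM3.rpow_const (Or.inr hα.le)).const_mul _
  refine squeeze_zero' (Eventually.of_forall fun n ↦ by positivity) ?_ hlim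
  filter_upwards [eventually_ge_atTop 1] with n hn
  have hM : 0 < (M n : ℝ) := by exact_mod_cast hMpos n
  calc _ ≤ (M n : ℝ) ^ (-α) * ((n : ℝ)⁻¹ *
        (864 / ((1 + α) / 3) * ((M n : ℝ) ^ 2 * (n : ℝ) ^ ((1 + α) / 3)))) := by
        gcongr
        exact sum_cumulantDiagramSum_le hdx.le hdε.le hktil0 hs (by linarith) (by linarith)
          (hMpos n) (hMle n hn)
    _ = _ := by
        rw [← rpow_neg_mul_inv_mul_eq hM (by positivity : (0 : ℝ) < n)]
        ring

/-- the fourth-cumulant bound of Part II of the proof of Lemma 1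
(case `a = 2`, residual Hermite rank `k̃₀ ≥ 2` with `k̃₀(2d_ε-1) > -1`, `1/4 < d_x < 1/2`):
under `M → ∞`, `M ≤ n`, `M^{max(3,k̃₀-2)}/n → 0`, the cumulant sum is
`o(M^{(4d_x-1) + (k̃₀(2d_ε-1)+1)})`. -/
theorem partII_cumulant_bound (dx dε : ℝ)
    (hdx0 : 1 / 4 < dx) (hdx : dx < 1 / 2) (hdε0 : 0 ≤ dε) (hdε : dε < 1 / 2)
    (ktil0 : ℕ) (hktil0 : 2 ≤ ktil0) (hlm : (-1 : ℝ) < (ktil0 : ℝ) * (2 * dε - 1))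
    (M : ℕ → ℕ) (hMpos : ∀ n, 0 < M n) (hM : Tendsto M atTop atTop)
    (hMle : ∀ n : ℕ, 0 < n → M n ≤ n)
    (hMn : Tendsto (fun n : ℕ => (M n : ℝ) ^ (max 3 (ktil0 - 2)) / (n : ℝ))
      atTop (nhds 0)) :
    Tendsto (fun n : ℕ =>
        (M n : ℝ) ^ (-((4 * dx - 1) + ((ktil0 : ℝ) * (2 * dε - 1) + 1))) *
          ((n : ℝ)⁻¹ *
            ∑ p ∈ Finset.Icc (-(M n : ℤ)) (M n : ℤ),
              ∑ q ∈ Finset.Icc (-(M n : ℤ)) (M n : ℤ),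
                ∑ r ∈ Finset.Icc (-(n : ℤ) + 1) ((n : ℤ) - 1),
                  (((|p| : ℝ) + 1) ^ (dx + dε - 1) * ((|q| : ℝ) + 1) ^ (dx + dε - 1) *
                      ((|r| : ℝ) + 1) ^ (2 * dx - 1) *
                      ((|r + q - p| : ℝ) + 1) ^ (((ktil0 : ℝ) - 1) * (2 * dε - 1)) +
                    ((|p| : ℝ) + 1) ^ (dx + dε - 1) * ((|q| : ℝ) + 1) ^ (dx + dε - 1) *
                      ((|r + q| : ℝ) + 1) ^ (dx + dε - 1) *
                      ((|r - p| : ℝ) + 1) ^ (dx + dε - 1) *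
                      ((|r + q - p| : ℝ) + 1) ^ (((ktil0 : ℝ) - 2) * (2 * dε - 1)) +
                    ((|r| : ℝ) + 1) ^ (2 * dx - 1) *
                      ((|r - p| : ℝ) + 1) ^ (dx + dε - 1) *
                      ((|r + q| : ℝ) + 1) ^ (dx + dε - 1) *
                      ((|r + q - p| : ℝ) + 1) ^ (((ktil0 : ℝ) - 1) * (2 * dε - 1)))))
      atTop (nhds 0) :=
  partII_cumulant_bound_general dx dε hdx0 hdx hdε ktil0 hktil0 hlm M hMpos hMle hMn
end

section
/- Let 1/3 < d_x < 1/2 and 1/3 < d_ε < 1/2. There exists a constant C (depending only on d_x, d_ε) such that for all integers n ≥ M ≥ 1: n^{−1} Σ_{p=−M}^{M} (|p|+1)^{d_x+d_ε−1} Σ_{q=−M}^{M} (|q|+1)^{d_x+d_ε−1} Σ_{r=−n+1}^{n−1} (|r+q|+1)^{2(d_x+d_ε−1)} (|r−p|+1)^{2(d_x+d_ε−1)} ≤ C ( M^{4d_x+4d_ε−1} n^{−1} + M^{4d_x+4d_ε−2} n^{2d_x+2d_ε−2} ). -/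
/-!
Write `a = d_x + d_ε - 1 ∈ (-1/3, 0]`. Every weight `(|s| + 1) ^ b` below has `-1 < b ≤ 0`, so
its sum over a window of length `O(N)` is `O(N ^ (b + 1))`, by telescoping against the concave
map `x ↦ x ^ (b + 1)`. In the sum over `r`, the triangle inequality `|p + q| ≤ |r + q| + |r - p|`
forces one of the two factors to be at most `(2⁻¹ (|p + q| + 1)) ^ (2a)`, so that sum is
`O((|p + q| + 1) ^ (2a) n ^ (2a + 1))`. Then `(|q| + 1) ^ a (|p + q| + 1) ^ (2a)` is at most
`(|q| + 1) ^ (3a) + (|p + q| + 1) ^ (3a)`, whose sum over `q` is `O(M ^ (3a + 1))` because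
`3a > -1`, and the sum over `p` is `O(M ^ (a + 1))`. Altogether the triple sum is
`O(M ^ (4a + 2) n ^ (2a + 1))`, which after division by `n` is the second term of the bound.
-/

open Finset Real

lemma mul_rpow_sub_one_le_rpow_sub_rpow_s16 {c x : ℝ} (hc0 : 0 ≤ c) (hc1 : c ≤ 1) (hx : 1 ≤ x) :
    c * x ^ (c - 1) ≤ x ^ c - (x - 1) ^ c := by
  have hx0 : 0 < x := by linarith
  have hbern : (1 + -x⁻¹) ^ c ≤ 1 + c * -x⁻¹ :=
    rpow_one_add_le_one_add_mul_self (by linarith [inv_le_one_of_one_le₀ hx]) hc0 hc1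
  have hsplit : (x - 1) ^ c = x ^ c * (1 + -x⁻¹) ^ c := by
    rw [← mul_rpow hx0.le (by linarith [inv_le_one_of_one_le₀ hx])]
    field_simp; ring_nf
  have hpow : x ^ (c - 1) = x ^ c * x⁻¹ := by rw [rpow_sub_one hx0.ne', div_eq_mul_inv]
  rw [hsplit, hpow]
  nlinarith [mul_le_mul_of_nonneg_left hbern (rpow_nonneg hx0.le c)]

lemma sum_Icc_neg_abs_add_one_rpow_le {b : ℝ} (hb : -1 < b) (hb0 : b ≤ 0) (N : ℕ) :
    ∑ s ∈ Icc (-(N : ℤ)) N, ((|s| : ℝ) + 1) ^ b ≤ 2 / (b + 1) * ((N : ℝ) + 1) ^ (b + 1) := by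
  have hb1 : 0 < b + 1 := by linarith
  induction N with
  | zero => simpa [le_div_iff₀ hb1] using (by linarith : b + 1 ≤ 2)
  | succ N ih =>
    have hIcc : Icc (-((N + 1 : ℕ) : ℤ)) (N + 1 : ℕ)
        = insert (-((N + 1 : ℕ) : ℤ)) (insert ((N + 1 : ℕ) : ℤ) (Icc (-(N : ℤ)) N)) := by
      ext s; simp only [mem_Icc, mem_insert]; omega
    have htele := mul_rpow_sub_one_le_rpow_sub_rpow_s16 hb1.le (by linarith)
      (show 1 ≤ (N : ℝ) + 2 by linarith [N.cast_nonneg (α := ℝ)])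
    rw [hIcc, sum_insert (by simp; omega), sum_insert (by simp)]
    push_cast
    rw [abs_neg, abs_of_nonneg (by positivity : (0 : ℝ) ≤ N + 1),
      show (N : ℝ) + 1 + 1 = N + 2 by ring]
    rw [show (N : ℝ) + 2 - 1 = N + 1 by ring, add_sub_cancel_right] at htele
    rw [div_mul_eq_mul_div, le_div_iff₀ hb1] at ih ⊢
    linarith

lemma sum_Icc_abs_add_one_rpow_le_s16 {b : ℝ} (hb : -1 < b) (hb0 : b ≤ 0) {A B : ℤ} {N : ℕ}
    (hN : 1 ≤ N) (hA : -(2 * N : ℤ) ≤ A) (hB : B ≤ 2 * N) :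
    ∑ s ∈ Icc A B, ((|s| : ℝ) + 1) ^ b ≤ 6 / (b + 1) * (N : ℝ) ^ (b + 1) := by
  have hb1 : 0 < b + 1 := by linarith
  have hN' : (1 : ℝ) ≤ N := by exact_mod_cast hN
  have hgrowth : ((2 * N : ℕ) + 1 : ℝ) ^ (b + 1) ≤ 3 * (N : ℝ) ^ (b + 1) :=
    calc ((2 * N : ℕ) + 1 : ℝ) ^ (b + 1) ≤ (3 * N : ℝ) ^ (b + 1) :=
          rpow_le_rpow (by positivity) (by push_cast; linarith) hb1.le
      _ = 3 ^ (b + 1) * (N : ℝ) ^ (b + 1) := mul_rpow (by norm_num) (by positivity)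
      _ ≤ 3 ^ (1 : ℝ) * (N : ℝ) ^ (b + 1) := by
          gcongr
          · norm_num
          · linarith
      _ = 3 * (N : ℝ) ^ (b + 1) := by rw [rpow_one]
  calc ∑ s ∈ Icc A B, ((|s| : ℝ) + 1) ^ b
      ≤ ∑ s ∈ Icc (-((2 * N : ℕ) : ℤ)) (2 * N : ℕ), ((|s| : ℝ) + 1) ^ b :=
        sum_le_sum_of_subset_of_nonneg (Icc_subset_Icc (by push_cast; omega) (by push_cast; omega))
          fun _ _ _ => by positivity
    _ ≤ 2 / (b + 1) * ((2 * N : ℕ) + 1 : ℝ) ^ (b + 1) := sum_Icc_neg_abs_add_one_rpow_le hb hb0 _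
    _ ≤ 2 / (b + 1) * (3 * (N : ℝ) ^ (b + 1)) := by gcongr
    _ = 6 / (b + 1) * (N : ℝ) ^ (b + 1) := by ring

lemma sum_Icc_abs_add_add_one_rpow_le {b : ℝ} (hb : -1 < b) (hb0 : b ≤ 0) {A B : ℤ} {N : ℕ}
    (hN : 1 ≤ N) (c : ℤ) (hA : -(2 * N : ℤ) ≤ A + c) (hB : B + c ≤ 2 * N) :
    ∑ r ∈ Icc A B, ((|r + c| : ℝ) + 1) ^ b ≤ 6 / (b + 1) * (N : ℝ) ^ (b + 1) := by
  have := sum_Icc_abs_add_one_rpow_le_s16 hb hb0 hN hA hB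
  rw [← map_add_right_Icc, sum_map] at this
  simpa using this

lemma rpow_mul_rpow_le_of_le_add {b t u v : ℝ} (hb : b ≤ 0) (ht : 0 < t) (hu : 0 ≤ u)
    (hv : 0 ≤ v) (htuv : t ≤ u + v) :
    u ^ b * v ^ b ≤ 2 ^ (-b) * t ^ b * (u ^ b + v ^ b) := by
  have hhalf : ∀ x, t / 2 ≤ x → x ^ b ≤ 2 ^ (-b) * t ^ b := fun x hx =>
    calc x ^ b ≤ (t / 2) ^ b := rpow_le_rpow_of_nonpos (by positivity) hx hb
      _ = 2 ^ (-b) * t ^ b := by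
        rw [div_rpow ht.le zero_le_two, rpow_neg zero_le_two, div_eq_inv_mul]
  have hu' := rpow_nonneg hu b
  have hv' := rpow_nonneg hv b
  have hK : 0 ≤ (2 : ℝ) ^ (-b) * t ^ b := by positivity
  rcases le_total u v with h | h
  · nlinarith [mul_le_mul_of_nonneg_left (hhalf v (by linarith)) hu', mul_nonneg hK hv']
  · nlinarith [mul_le_mul_of_nonneg_right (hhalf u (by linarith)) hv', mul_nonneg hK hu']

lemma rpow_mul_rpow_le_rpow_add_rpow {b c u t : ℝ} (hb : b ≤ 0) (hc : c ≤ 0) (hu : 0 < u)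
    (ht : 0 < t) : u ^ b * t ^ c ≤ u ^ (b + c) + t ^ (b + c) := by
  rw [rpow_add hu, rpow_add ht]
  have hu' := rpow_nonneg hu.le (b + c)
  have ht' := rpow_nonneg ht.le (b + c)
  rcases le_total u t with h | h
  · have := mul_le_mul_of_nonneg_left (rpow_le_rpow_of_nonpos hu h hc) (rpow_nonneg hu.le b)
    nlinarith [rpow_nonneg ht.le b, rpow_nonneg ht.le c]
  · have := mul_le_mul_of_nonneg_right (rpow_le_rpow_of_nonpos ht h hb) (rpow_nonneg ht.le c)
    nlinarith [rpow_nonneg hu.le b, rpow_nonneg hu.le c]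

lemma sum_Icc_abs_add_mul_abs_sub_rpow_le {b : ℝ} (hb : -1 < b) (hb0 : b ≤ 0) {n : ℕ} (hn : 1 ≤ n)
    {p q : ℤ} (hp : p ∈ Icc (-(n : ℤ)) n) (hq : q ∈ Icc (-(n : ℤ)) n) :
    ∑ r ∈ Icc (-(n : ℤ) + 1) (n - 1), ((|r + q| : ℝ) + 1) ^ b * ((|r - p| : ℝ) + 1) ^ b
      ≤ 2 ^ (-b) * (12 / (b + 1)) * ((|p + q| : ℝ) + 1) ^ b * (n : ℝ) ^ (b + 1) := by
  rw [mem_Icc] at hp hq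
  have htri : ∀ r : ℤ, (|p + q| : ℝ) + 1 ≤ (|(r : ℝ) + q| + 1) + (|(r : ℝ) - p| + 1) := fun r => by
    have := abs_sub ((r + q : ℝ)) (r - p)
    rw [show (r + q : ℝ) - (r - p) = p + q by ring] at this
    linarith
  have hshift : ∑ r ∈ Icc (-(n : ℤ) + 1) (n - 1), ((|r - p| : ℝ) + 1) ^ b
      = ∑ r ∈ Icc (-(n : ℤ) + 1) (n - 1), ((|r + ((-p : ℤ) : ℝ)| : ℝ) + 1) ^ b := by
    push_cast; simp only [sub_eq_add_neg]
  have hsum_add := sum_Icc_abs_add_add_one_rpow_le hb hb0 hn q (A := -(n : ℤ) + 1) (B := n - 1)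
    (by omega) (by omega)
  have hsum_sub := sum_Icc_abs_add_add_one_rpow_le hb hb0 hn (-p) (A := -(n : ℤ) + 1) (B := n - 1)
    (by omega) (by omega)
  calc ∑ r ∈ Icc (-(n : ℤ) + 1) (n - 1), ((|r + q| : ℝ) + 1) ^ b * ((|r - p| : ℝ) + 1) ^ b
      ≤ ∑ r ∈ Icc (-(n : ℤ) + 1) (n - 1),
          2 ^ (-b) * ((|p + q| : ℝ) + 1) ^ b *
            (((|r + q| : ℝ) + 1) ^ b + ((|r - p| : ℝ) + 1) ^ b) :=
        sum_le_sum fun r _ =>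
          rpow_mul_rpow_le_of_le_add hb0 (by positivity) (by positivity) (by positivity) (htri r)
    _ = 2 ^ (-b) * ((|p + q| : ℝ) + 1) ^ b * (∑ r ∈ Icc (-(n : ℤ) + 1) (n - 1),
          ((|r + q| : ℝ) + 1) ^ b + ∑ r ∈ Icc (-(n : ℤ) + 1) (n - 1), ((|r - p| : ℝ) + 1) ^ b) := by
        rw [← mul_sum, sum_add_distrib]
    _ ≤ 2 ^ (-b) * ((|p + q| : ℝ) + 1) ^ b *
          (6 / (b + 1) * (n : ℝ) ^ (b + 1) + 6 / (b + 1) * (n : ℝ) ^ (b + 1)) := by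
        rw [hshift]
        exact mul_le_mul_of_nonneg_left (add_le_add hsum_add hsum_sub) (by positivity)
    _ = 2 ^ (-b) * (12 / (b + 1)) * ((|p + q| : ℝ) + 1) ^ b * (n : ℝ) ^ (b + 1) := by ring

lemma sum_Icc_abs_mul_abs_add_rpow_le {b c : ℝ} (hb : b ≤ 0) (hc : c ≤ 0) (hbc : -1 < b + c)
    {M : ℕ} (hM : 1 ≤ M) {p : ℤ} (hp : p ∈ Icc (-(M : ℤ)) M) :
    ∑ q ∈ Icc (-(M : ℤ)) M, ((|q| : ℝ) + 1) ^ b * ((|p + q| : ℝ) + 1) ^ c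
      ≤ 12 / (b + c + 1) * (M : ℝ) ^ (b + c + 1) := by
  rw [mem_Icc] at hp
  have hbc0 : b + c ≤ 0 := by linarith
  calc ∑ q ∈ Icc (-(M : ℤ)) M, ((|q| : ℝ) + 1) ^ b * ((|p + q| : ℝ) + 1) ^ c
      ≤ ∑ q ∈ Icc (-(M : ℤ)) M, (((|q| : ℝ) + 1) ^ (b + c) + ((|q + p| : ℝ) + 1) ^ (b + c)) :=
        sum_le_sum fun q _ => by
          rw [add_comm (q : ℝ)]
          exact rpow_mul_rpow_le_rpow_add_rpow hb hc (by positivity) (by positivity)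
    _ = ∑ q ∈ Icc (-(M : ℤ)) M, ((|q| : ℝ) + 1) ^ (b + c)
          + ∑ q ∈ Icc (-(M : ℤ)) M, ((|q + p| : ℝ) + 1) ^ (b + c) := sum_add_distrib
    _ ≤ 6 / (b + c + 1) * (M : ℝ) ^ (b + c + 1) + 6 / (b + c + 1) * (M : ℝ) ^ (b + c + 1) :=
        add_le_add (sum_Icc_abs_add_one_rpow_le_s16 hbc hbc0 hM (by omega) (by omega))
          (sum_Icc_abs_add_add_one_rpow_le hbc hbc0 hM p (by omega) (by omega))
    _ = 12 / (b + c + 1) * (M : ℝ) ^ (b + c + 1) := by ring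

lemma figure6_sum_le {a : ℝ} (ha : -(1 / 3) < a) (ha0 : a ≤ 0) :
    ∃ C : ℝ, 0 < C ∧ ∀ n M : ℕ, 1 ≤ M → M ≤ n →
      ∑ p ∈ Icc (-(M : ℤ)) M, ((|p| : ℝ) + 1) ^ a *
          ∑ q ∈ Icc (-(M : ℤ)) M, ((|q| : ℝ) + 1) ^ a *
            ∑ r ∈ Icc (-(n : ℤ) + 1) (n - 1),
              ((|r + q| : ℝ) + 1) ^ (2 * a) * ((|r - p| : ℝ) + 1) ^ (2 * a)
        ≤ C * (M : ℝ) ^ (4 * a + 2) * (n : ℝ) ^ (2 * a + 1) := by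
  set Kr := 2 ^ (-(2 * a)) * (12 / (2 * a + 1))
  set Kq := 12 / (3 * a + 1)
  set Kp := 6 / (a + 1)
  have hKr : 0 < Kr := mul_pos (rpow_pos_of_pos two_pos _) (div_pos (by norm_num) (by linarith))
  have hKq : 0 < Kq := div_pos (by norm_num) (by linarith)
  have hKp : 0 < Kp := div_pos (by norm_num) (by linarith)
  refine ⟨Kr * Kq * Kp, by positivity, fun n M hM hMn => ?_⟩
  have hM0 : (0 : ℝ) < M := by exact_mod_cast hM
  have hwindow : ∀ x ∈ Icc (-(M : ℤ)) M, x ∈ Icc (-(n : ℤ)) n := fun x hx => by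
    rw [mem_Icc] at hx ⊢; omega
  calc _ ≤ ∑ p ∈ Icc (-(M : ℤ)) M, ((|p| : ℝ) + 1) ^ a *
        ∑ q ∈ Icc (-(M : ℤ)) M, ((|q| : ℝ) + 1) ^ a *
          (Kr * ((|p + q| : ℝ) + 1) ^ (2 * a) * (n : ℝ) ^ (2 * a + 1)) := by
        gcongr with p hp q hq
        exact sum_Icc_abs_add_mul_abs_sub_rpow_le (by linarith) (by linarith) (hM.trans hMn)
          (hwindow p hp) (hwindow q hq)
    _ = Kr * (n : ℝ) ^ (2 * a + 1) * ∑ p ∈ Icc (-(M : ℤ)) M, ((|p| : ℝ) + 1) ^ a *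
        ∑ q ∈ Icc (-(M : ℤ)) M, ((|q| : ℝ) + 1) ^ a * ((|p + q| : ℝ) + 1) ^ (2 * a) := by
        simp only [mul_sum]
        exact sum_congr rfl fun p _ => sum_congr rfl fun q _ => by ring
    _ ≤ Kr * (n : ℝ) ^ (2 * a + 1) * ∑ p ∈ Icc (-(M : ℤ)) M, ((|p| : ℝ) + 1) ^ a *
        (12 / (a + 2 * a + 1) * (M : ℝ) ^ (a + 2 * a + 1)) := by
        gcongr with p hp
        exact sum_Icc_abs_mul_abs_add_rpow_le ha0 (by linarith) (by linarith) hM hp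
    _ = Kr * Kq * (n : ℝ) ^ (2 * a + 1) * (M : ℝ) ^ (3 * a + 1) *
        ∑ p ∈ Icc (-(M : ℤ)) M, ((|p| : ℝ) + 1) ^ a := by
        rw [← sum_mul, show a + 2 * a + 1 = 3 * a + 1 by ring]; ring
    _ ≤ Kr * Kq * (n : ℝ) ^ (2 * a + 1) * (M : ℝ) ^ (3 * a + 1) * (Kp * (M : ℝ) ^ (a + 1)) := by
        gcongr
        exact sum_Icc_abs_add_one_rpow_le_s16 (by linarith) ha0 hM (by omega) (by omega)
    _ = _ := by
        rw [show 4 * a + 2 = (3 * a + 1) + (a + 1) by ring, rpow_add hM0 (3 * a + 1)]; ring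

/-- the bound for the connected-diagram term
`γ_xε(p)γ_xε(q)γ_xε²(r+q)γ_εx²(r-p)` (Figure 6) in Part III of the proof of Lemma 1,
for `1/3 < d_x, d_ε < 1/2`. -/
theorem figure6_diagram_bound (dx dε : ℝ)
    (hdx1 : 1 / 3 < dx) (hdx2 : dx < 1 / 2) (hdε1 : 1 / 3 < dε) (hdε2 : dε < 1 / 2) :
    ∃ C : ℝ, 0 < C ∧ ∀ n M : ℕ, 1 ≤ M → M ≤ n →
      (n : ℝ)⁻¹ *
          ∑ p ∈ Finset.Icc (-(M : ℤ)) (M : ℤ), ((|p| : ℝ) + 1) ^ (dx + dε - 1) *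
            ∑ q ∈ Finset.Icc (-(M : ℤ)) (M : ℤ), ((|q| : ℝ) + 1) ^ (dx + dε - 1) *
              ∑ r ∈ Finset.Icc (-(n : ℤ) + 1) ((n : ℤ) - 1),
                ((|r + q| : ℝ) + 1) ^ (2 * (dx + dε - 1)) *
                  ((|r - p| : ℝ) + 1) ^ (2 * (dx + dε - 1))
        ≤ C * ((M : ℝ) ^ (4 * dx + 4 * dε - 1) * (n : ℝ)⁻¹ +
            (M : ℝ) ^ (4 * dx + 4 * dε - 2) * (n : ℝ) ^ (2 * dx + 2 * dε - 2)) := by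
  set a := dx + dε - 1
  obtain ⟨C, hC, hsum⟩ := figure6_sum_le (a := a) (by linarith) (by linarith)
  refine ⟨C, hC, fun n M hM hMn => ?_⟩
  have hn : (0 : ℝ) < n := by exact_mod_cast hM.trans hMn
  rw [show 4 * dx + 4 * dε - 2 = 4 * a + 2 by ring, show 2 * dx + 2 * dε - 2 = 2 * a by ring]
  calc _ ≤ (n : ℝ)⁻¹ * (C * (M : ℝ) ^ (4 * a + 2) * (n : ℝ) ^ (2 * a + 1)) := by
        gcongr; exact hsum n M hM hMn
    _ = C * ((M : ℝ) ^ (4 * a + 2) * (n : ℝ) ^ (2 * a)) := by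
        rw [rpow_add hn, rpow_one]; field_simp
    _ ≤ _ := by gcongr; exact le_add_of_nonneg_left (by positivity)
end

section
/- Let 1/3 < d_x < 1/2 and 1/3 < d_ε < 1/2. There exists a constant C (depending only on d_x, d_ε) such that for all integers n ≥ M ≥ 1: n^{−1} Σ_{p=−M}^{M} Σ_{q=−M}^{M} Σ_{r=−n+1}^{n−1} (|r|+1)^{2d_x−1} (|r+p−q|+1)^{2d_ε−1} (|r−p|+1)^{2(d_x+d_ε−1)} (|r+q|+1)^{2(d_x+d_ε−1)} ≤ C ( M^{4d_x+4d_ε−1} n^{−1} + M^{4d_x+4d_ε−2} n^{2d_x+2d_ε−2} ). -/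
open Finset Real

/-! With `a = 2d_x - 1`, `b = 2d_ε - 1` and `c = a + b = 2(d_x + d_ε - 1) ∈ (-1, 0)`, the summand is
`decay a r * decay b (r + p - q) * decay c (r - p) * decay c (r + q)`; sum over `p, q` first.

For `|r| ≤ 3M` drop the first two factors (both `≤ 1`): what remains is a product of two sums of
`decay c` over windows of length `2M + 1` near the origin, each `O(M^(c+1))`, and there are `O(M)`
such `r`, giving `O(M^(2c+3))`.

For `|r| > 3M` we have `|r - p|, |r + q| ≥ M` and `|r + p - q| + 1 ≥ (|r| + 1) / 3`, so the
summand is `O(M^(2c) * decay (a + b) r)`; summing over `p, q` and then over `|r| < n` gives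
`O(M^(2c+2) n^(c+1))`, because `c > -1` makes `∑_{|t| ≤ N} (|t| + 1)^c = O(N^(c+1))`.
-/

noncomputable def decay (e x : ℝ) : ℝ := (|x| + 1) ^ e

lemma decay_nonneg (e x : ℝ) : 0 ≤ decay e x := by unfold decay; positivity

lemma decay_neg (e x : ℝ) : decay e (-x) = decay e x := by simp [decay]

lemma decay_mul (e₁ e₂ x : ℝ) : decay e₁ x * decay e₂ x = decay (e₁ + e₂) x :=
  (rpow_add (by positivity) e₁ e₂).symm

lemma decay_le_rpow {e L x : ℝ} (he : e ≤ 0) (hL : 0 < L) (h : L ≤ |x| + 1) :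
    decay e x ≤ L ^ e :=
  rpow_le_rpow_of_nonpos hL h he

lemma decay_le_one {e : ℝ} (he : e ≤ 0) (x : ℝ) : decay e x ≤ 1 :=
  rpow_le_one_of_one_le_of_nonpos (by linarith [abs_nonneg x]) he

lemma decay_le_mul_decay {e k x y : ℝ} (he₁ : -1 ≤ e) (he₀ : e ≤ 0) (hk : 1 ≤ k)
    (h : |y| + 1 ≤ k * (|x| + 1)) : decay e x ≤ k * decay e y := by
  have hk₀ : 0 < k := by linarith
  calc decay e x ≤ ((|y| + 1) / k) ^ e :=
        decay_le_rpow he₀ (by positivity) ((div_le_iff₀' hk₀).2 h)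
    _ = k ^ (-e) * decay e y := by
        rw [div_rpow (by positivity) hk₀.le, rpow_neg hk₀.le, decay]; ring
    _ ≤ k * decay e y := by
        gcongr
        · exact decay_nonneg e y
        · exact rpow_le_self_of_one_le hk (by linarith)

lemma mul_rpow_le_sub_rpow {e x : ℝ} (he₁ : -1 < e) (he₀ : e ≤ 0) (hx : 0 ≤ x) :
    (e + 1) * (x + 1) ^ e ≤ (x + 1) ^ (e + 1) - x ^ (e + 1) := by
  have hx₁ : 0 < x + 1 := by linarith
  have hinv : (x + 1)⁻¹ ≤ 1 := inv_le_one_of_one_le₀ (by linarith)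
  have hsplit : x = (x + 1) * (1 + -(x + 1)⁻¹) := by field_simp; ring
  have hbern : (1 + -(x + 1)⁻¹) ^ (e + 1) ≤ 1 + (e + 1) * -(x + 1)⁻¹ :=
    rpow_one_add_le_one_add_mul_self (neg_le_neg hinv) (by linarith) (by linarith)
  have hpow : (x + 1) ^ e = (x + 1) ^ (e + 1) * (x + 1)⁻¹ := by
    rw [rpow_add hx₁, rpow_one, mul_inv_cancel_right₀ hx₁.ne']
  calc (e + 1) * (x + 1) ^ e
        = (x + 1) ^ (e + 1) - (x + 1) ^ (e + 1) * (1 + (e + 1) * -(x + 1)⁻¹) := by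
        rw [hpow]; ring
    _ ≤ (x + 1) ^ (e + 1) - (x + 1) ^ (e + 1) * (1 + -(x + 1)⁻¹) ^ (e + 1) := by gcongr
    _ = (x + 1) ^ (e + 1) - x ^ (e + 1) := by
        rw [← mul_rpow hx₁.le (by linarith), ← hsplit]

lemma sum_decay_Icc_le {e : ℝ} (he₁ : -1 < e) (he₀ : e ≤ 0) (N : ℕ) :
    ∑ t ∈ Icc (-(N : ℤ)) N, decay e t ≤ 2 / (e + 1) * ((N : ℝ) + 1) ^ (e + 1) := by
  have hs : 0 < e + 1 := by linarith
  induction N with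
  | zero =>
    simp only [CharP.cast_eq_zero, neg_zero, Icc_self, sum_singleton, Int.cast_zero, zero_add,
      one_rpow, mul_one, decay, abs_zero]
    rw [one_le_div hs]
    linarith
  | succ N ih =>
    have hIcc : Icc (-((N + 1 : ℕ) : ℤ)) ((N + 1 : ℕ) : ℤ)
        = insert (-(N + 1 : ℤ)) (insert (N + 1 : ℤ) (Icc (-(N : ℤ)) N)) := by
      ext t; simp only [mem_Icc, mem_insert]; omega
    have hend : ∀ t : ℤ, |(t : ℝ)| = N + 1 → decay e t = ((N : ℝ) + 1 + 1) ^ e := by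
      intro t ht; rw [decay, ht]
    rw [hIcc, sum_insert (by simp only [mem_insert, mem_Icc]; omega),
      sum_insert (by simp only [mem_Icc]; omega),
      hend _ (by push_cast; rw [abs_neg]; exact abs_of_pos (by positivity)),
      hend _ (by push_cast; exact abs_of_pos (by positivity))]
    -- Bernoulli makes the sum telescope: `(e+1) (N+2)^e ≤ (N+2)^(e+1) - (N+1)^(e+1)`.
    have hstep := mul_le_mul_of_nonneg_left (mul_rpow_le_sub_rpow he₁ he₀
      (by positivity : (0 : ℝ) ≤ N + 1)) (by positivity : 0 ≤ 2 / (e + 1))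
    have hcancel :
        2 / (e + 1) * ((e + 1) * ((N : ℝ) + 1 + 1) ^ e) = 2 * ((N : ℝ) + 1 + 1) ^ e := by
      field_simp
    push_cast
    linarith

lemma sum_decay_le_of_subset {e k L : ℝ} (he₁ : -1 < e) (he₀ : e ≤ 0) {S : Finset ℤ} {N : ℕ}
    (hS : S ⊆ Icc (-(N : ℤ)) N) (hk : 1 ≤ k) (hL : 0 ≤ L) (hN : (N : ℝ) + 1 ≤ k * L) :
    ∑ t ∈ S, decay e t ≤ 2 * k / (e + 1) * L ^ (e + 1) := by
  have hs : 0 < e + 1 := by linarith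
  calc ∑ t ∈ S, decay e t ≤ ∑ t ∈ Icc (-(N : ℤ)) N, decay e t :=
        sum_le_sum_of_subset_of_nonneg hS fun t _ _ => decay_nonneg e t
    _ ≤ 2 / (e + 1) * ((N : ℝ) + 1) ^ (e + 1) := sum_decay_Icc_le he₁ he₀ N
    _ ≤ 2 / (e + 1) * (k ^ (e + 1) * L ^ (e + 1)) := by
        rw [← mul_rpow (by linarith) hL]
        gcongr
    _ ≤ 2 / (e + 1) * (k * L ^ (e + 1)) := by
        gcongr
        exact rpow_le_self_of_one_le hk (by linarith)
    _ = 2 * k / (e + 1) * L ^ (e + 1) := by ring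

lemma sum_decay_add_le {e : ℝ} (he₁ : -1 < e) (he₀ : e ≤ 0) {M K : ℕ} (hM : 1 ≤ M) {c : ℤ}
    (hc : |c| ≤ K * M) :
    ∑ q ∈ Icc (-(M : ℤ)) M, decay e (c + q) ≤ 2 * (K + 2) / (e + 1) * (M : ℝ) ^ (e + 1) := by
  have hshift : ∑ q ∈ Icc (-(M : ℤ)) M, decay e (c + q)
      = ∑ t ∈ Icc (c - M) (c + M), decay e t := by
    rw [sub_eq_add_neg, ← map_add_left_Icc, sum_map]
    simp only [addLeftEmbedding_apply, Int.cast_add]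
  rw [hshift]
  rw [abs_le] at hc
  refine sum_decay_le_of_subset (N := (K + 1) * M) he₁ he₀ ?_ (by linarith) (Nat.cast_nonneg M) ?_
  · intro t ht
    simp only [mem_Icc] at ht ⊢
    push_cast
    constructor <;> nlinarith
  · have : (1 : ℝ) ≤ M := by exact_mod_cast hM
    push_cast
    nlinarith

lemma Int.card_Icc_neg_self (N : ℕ) : #(Icc (-(N : ℤ)) N) = 2 * N + 1 := by
  rw [Int.card_Icc]; omega

noncomputable def diagramTerm (a b c : ℝ) (p q r : ℤ) : ℝ :=
  decay a r * decay b (r + p - q) * decay c (r - p) * decay c (r + q)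

lemma sum_diagramTerm_le_of_abs_le {a b c : ℝ} (ha : a ≤ 0) (hb : b ≤ 0) (hc₁ : -1 < c)
    (hc₀ : c ≤ 0) {M : ℕ} (hM : 1 ≤ M) {r : ℤ} (hr : |r| ≤ 3 * (M : ℤ)) :
    ∑ p ∈ Icc (-(M : ℤ)) M, ∑ q ∈ Icc (-(M : ℤ)) M, diagramTerm a b c p q r
      ≤ (10 / (c + 1)) ^ 2 * (M : ℝ) ^ (2 * c + 2) := by
  have hwindow : ∀ s : ℤ, |s| ≤ 3 * M →
      ∑ q ∈ Icc (-(M : ℤ)) M, decay c (s + q) ≤ 10 / (c + 1) * (M : ℝ) ^ (c + 1) := by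
    intro s hs
    have := sum_decay_add_le (K := 3) hc₁ hc₀ hM (c := s) (by exact_mod_cast hs)
    norm_num at this
    exact this
  have hterm : ∀ p q : ℤ, diagramTerm a b c p q r ≤ decay c ((-r : ℤ) + p) * decay c (r + q) := by
    intro p q
    have hflip : decay c (r - p) = decay c ((-r : ℤ) + p) := by
      rw [← decay_neg]; push_cast; ring_nf
    rw [diagramTerm, mul_assoc _ (decay c _), hflip]
    exact mul_le_of_le_one_left (mul_nonneg (decay_nonneg _ _) (decay_nonneg _ _))
      (mul_le_one₀ (decay_le_one ha _) (decay_nonneg _ _) (decay_le_one hb _))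
  have hM₀ : (0 : ℝ) < M := by exact_mod_cast hM
  calc _ ≤ ∑ p ∈ Icc (-(M : ℤ)) M, ∑ q ∈ Icc (-(M : ℤ)) M,
          decay c ((-r : ℤ) + p) * decay c (r + q) := by
        gcongr with p _ q _
        exact hterm p q
    _ = (∑ p ∈ Icc (-(M : ℤ)) M, decay c ((-r : ℤ) + p)) *
          ∑ q ∈ Icc (-(M : ℤ)) M, decay c (r + q) := (sum_mul_sum _ _ _ _).symm
    _ ≤ (10 / (c + 1) * (M : ℝ) ^ (c + 1)) * (10 / (c + 1) * (M : ℝ) ^ (c + 1)) := by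
        have hnonneg := sum_nonneg fun q (_ : q ∈ Icc (-(M : ℤ)) M) => decay_nonneg c (r + q)
        exact mul_le_mul (hwindow (-r) (by rwa [abs_neg])) (hwindow r hr) hnonneg
          (hnonneg.trans (hwindow r hr))
    _ = (10 / (c + 1)) ^ 2 * (M : ℝ) ^ (2 * c + 2) := by
        rw [show 2 * c + 2 = (c + 1) + (c + 1) by ring, rpow_add hM₀ (c + 1)]; ring

lemma diagramTerm_le_of_lt_abs {a b c : ℝ} (hb₁ : -1 ≤ b) (hb₀ : b ≤ 0) (hc₀ : c ≤ 0)
    (hab : a + b = c) {M : ℝ} (hM : 0 < M) {p q r : ℤ} (hp : |(p : ℝ)| ≤ M) (hq : |(q : ℝ)| ≤ M)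
    (hr : 3 * M < |(r : ℝ)|) :
    diagramTerm a b c p q r ≤ 3 * M ^ (2 * c) * decay c r := by
  have hB : decay b (r + p - q) ≤ 3 * decay b r := by
    refine decay_le_mul_decay hb₁ hb₀ (by norm_num) ?_
    have hrpq := abs_sub_abs_le_abs_sub (r : ℝ) (r + p - q)
    rw [show (r : ℝ) - (r + p - q) = q - p by ring] at hrpq
    linarith [abs_sub (q : ℝ) p]
  have hC : decay c (r - p) ≤ M ^ c := by
    refine decay_le_rpow hc₀ hM ?_
    linarith [abs_sub_abs_le_abs_sub (r : ℝ) p]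
  have hD : decay c (r + q) ≤ M ^ c := by
    refine decay_le_rpow hc₀ hM ?_
    have := abs_sub_abs_le_abs_sub (r : ℝ) (-q)
    rw [abs_neg, sub_neg_eq_add] at this
    linarith
  have := decay_nonneg a r
  have := decay_nonneg b r
  calc diagramTerm a b c p q r ≤ decay a r * (3 * decay b r) * M ^ c * M ^ c := by
        rw [diagramTerm]
        gcongr
        all_goals exact decay_nonneg _ _
    _ = 3 * (decay a r * decay b r) * (M ^ c * M ^ c) := by ring
    _ = 3 * M ^ (2 * c) * decay c r := by
        rw [decay_mul, hab, ← rpow_add hM, ← two_mul]; ring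

lemma sum_diagramTerm_le_of_lt_abs {a b c : ℝ} (hb₁ : -1 ≤ b) (hb₀ : b ≤ 0) (hc₀ : c ≤ 0)
    (hab : a + b = c) {M : ℕ} (hM : 1 ≤ M) {r : ℤ} (hr : 3 * (M : ℤ) < |r|) :
    ∑ p ∈ Icc (-(M : ℤ)) M, ∑ q ∈ Icc (-(M : ℤ)) M, diagramTerm a b c p q r
      ≤ 27 * (M : ℝ) ^ (2 * c + 2) * decay c r := by
  have hM₁ : (1 : ℝ) ≤ M := by exact_mod_cast hM
  have habs : ∀ t ∈ Icc (-(M : ℤ)) M, |(t : ℝ)| ≤ M := fun t ht => by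
    rw [← Int.cast_abs]; exact_mod_cast abs_le.2 (mem_Icc.1 ht)
  have hr' : 3 * (M : ℝ) < |(r : ℝ)| := by rw [← Int.cast_abs]; exact_mod_cast hr
  have hX : 0 ≤ 3 * (M : ℝ) ^ (2 * c) * decay c r := by have := decay_nonneg c r; positivity
  calc _ ≤ ∑ p ∈ Icc (-(M : ℤ)) M, ∑ q ∈ Icc (-(M : ℤ)) M, 3 * (M : ℝ) ^ (2 * c) * decay c r :=
        sum_le_sum fun p hp => sum_le_sum fun q hq =>
          diagramTerm_le_of_lt_abs hb₁ hb₀ hc₀ hab (by linarith) (habs p hp) (habs q hq) hr'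
    _ = (2 * M + 1) * ((2 * M + 1) * (3 * (M : ℝ) ^ (2 * c) * decay c r)) := by
        simp only [sum_const, Int.card_Icc_neg_self, nsmul_eq_mul]; push_cast; ring
    _ ≤ (3 * M) * ((3 * M) * (3 * (M : ℝ) ^ (2 * c) * decay c r)) := by
        gcongr <;> linarith
    _ = 27 * (M : ℝ) ^ (2 * c + 2) * decay c r := by
        rw [rpow_add (by linarith), rpow_two]; ring

lemma sum_filter_abs_le_sum_diagramTerm_le {a b c : ℝ} (ha : a ≤ 0) (hb : b ≤ 0) (hc₁ : -1 < c)
    (hc₀ : c ≤ 0) {M : ℕ} (hM : 1 ≤ M) (R : Finset ℤ) :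
    ∑ r ∈ R with |r| ≤ 3 * (M : ℤ),
        ∑ p ∈ Icc (-(M : ℤ)) M, ∑ q ∈ Icc (-(M : ℤ)) M, diagramTerm a b c p q r
      ≤ 7 * (10 / (c + 1)) ^ 2 * (M : ℝ) ^ (2 * c + 3) := by
  have hM₁ : (1 : ℝ) ≤ M := by exact_mod_cast hM
  have hcard : (#{r ∈ R | |r| ≤ 3 * (M : ℤ)} : ℝ) ≤ 7 * M := by
    have hsub : {r ∈ R | |r| ≤ 3 * (M : ℤ)} ⊆ Icc (-((3 * M : ℕ) : ℤ)) (3 * M : ℕ) := by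
      intro r hr
      rw [mem_Icc]; push_cast
      exact abs_le.1 (mem_filter.1 hr).2
    have := card_le_card hsub
    rw [Int.card_Icc_neg_self] at this
    have : (#{r ∈ R | |r| ≤ 3 * (M : ℤ)} : ℝ) ≤ 2 * (3 * M) + 1 := by exact_mod_cast this
    linarith
  calc _ ≤ ∑ r ∈ R with |r| ≤ 3 * (M : ℤ), (10 / (c + 1)) ^ 2 * (M : ℝ) ^ (2 * c + 2) :=
        sum_le_sum fun r hr => sum_diagramTerm_le_of_abs_le ha hb hc₁ hc₀ hM (mem_filter.1 hr).2
    _ = #{r ∈ R | |r| ≤ 3 * (M : ℤ)} * ((10 / (c + 1)) ^ 2 * (M : ℝ) ^ (2 * c + 2)) := by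
        rw [sum_const, nsmul_eq_mul]
    _ ≤ 7 * M * ((10 / (c + 1)) ^ 2 * (M : ℝ) ^ (2 * c + 2)) := by gcongr
    _ = 7 * (10 / (c + 1)) ^ 2 * (M : ℝ) ^ (2 * c + 3) := by
        rw [show 2 * c + 3 = 2 * c + 2 + 1 by ring, rpow_add_one (by positivity)]; ring

lemma sum_filter_lt_abs_sum_diagramTerm_le {a b c : ℝ} (hb₁ : -1 ≤ b) (hb₀ : b ≤ 0)
    (hc₁ : -1 < c) (hc₀ : c ≤ 0) (hab : a + b = c) {M n : ℕ} (hM : 1 ≤ M) (hn : 1 ≤ n)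
    {R : Finset ℤ} (hR : R ⊆ Icc (-(n : ℤ)) n) :
    ∑ r ∈ R with 3 * (M : ℤ) < |r|,
        ∑ p ∈ Icc (-(M : ℤ)) M, ∑ q ∈ Icc (-(M : ℤ)) M, diagramTerm a b c p q r
      ≤ 108 / (c + 1) * (M : ℝ) ^ (2 * c + 2) * (n : ℝ) ^ (c + 1) := by
  have hn₁ : (1 : ℝ) ≤ n := by exact_mod_cast hn
  calc _ ≤ ∑ r ∈ R with 3 * (M : ℤ) < |r|, 27 * (M : ℝ) ^ (2 * c + 2) * decay c r :=
        sum_le_sum fun r hr =>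
          sum_diagramTerm_le_of_lt_abs hb₁ hb₀ hc₀ hab hM (mem_filter.1 hr).2
    _ = 27 * (M : ℝ) ^ (2 * c + 2) * ∑ r ∈ R with 3 * (M : ℤ) < |r|, decay c r :=
        (mul_sum _ _ _).symm
    _ ≤ 27 * (M : ℝ) ^ (2 * c + 2) * (2 * 2 / (c + 1) * (n : ℝ) ^ (c + 1)) := by
        gcongr
        exact sum_decay_le_of_subset hc₁ hc₀ ((filter_subset _ R).trans hR) (by norm_num)
          (by linarith) (by linarith)
    _ = 108 / (c + 1) * (M : ℝ) ^ (2 * c + 2) * (n : ℝ) ^ (c + 1) := by ring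

theorem sum_diagramTerm_le {a b c : ℝ} (ha : a ≤ 0) (hb₁ : -1 ≤ b) (hb₀ : b ≤ 0) (hc₁ : -1 < c)
    (hab : a + b = c) {n M : ℕ} (hM : 1 ≤ M) (hMn : M ≤ n) :
    (n : ℝ)⁻¹ * ∑ p ∈ Icc (-(M : ℤ)) M, ∑ q ∈ Icc (-(M : ℤ)) M,
        ∑ r ∈ Icc (-(n : ℤ) + 1) (n - 1), diagramTerm a b c p q r
      ≤ (7 * (10 / (c + 1)) ^ 2 + 108 / (c + 1)) *
          ((M : ℝ) ^ (2 * c + 3) * (n : ℝ)⁻¹ + (M : ℝ) ^ (2 * c + 2) * (n : ℝ) ^ c) := by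
  have hc₀ : c ≤ 0 := by linarith
  have hn₀ : (0 : ℝ) < n := by exact_mod_cast hM.trans hMn
  set R := Icc (-(n : ℤ) + 1) (n - 1)
  have hR : R ⊆ Icc (-(n : ℤ)) n := Icc_subset_Icc (by omega) (by omega)
  have hsplit := sum_filter_add_sum_filter_not R (fun r => |r| ≤ 3 * (M : ℤ))
    (fun r => ∑ p ∈ Icc (-(M : ℤ)) M, ∑ q ∈ Icc (-(M : ℤ)) M, diagramTerm a b c p q r)
  simp only [not_le] at hsplit
  have hnear := sum_filter_abs_le_sum_diagramTerm_le ha hb₀ hc₁ hc₀ hM R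
  have hfar := sum_filter_lt_abs_sum_diagramTerm_le hb₁ hb₀ hc₁ hc₀ hab hM (hM.trans hMn) hR
  rw [rpow_add_one hn₀.ne'] at hfar
  rw [sum_congr rfl fun p _ => sum_comm, sum_comm, ← hsplit]
  have hA : 0 ≤ 7 * (10 / (c + 1)) ^ 2 * (M : ℝ) ^ (2 * c + 2) * (n : ℝ) ^ c := by positivity
  have hB : 0 ≤ 108 / (c + 1) * (M : ℝ) ^ (2 * c + 3) * (n : ℝ)⁻¹ := by
    have := div_nonneg (by norm_num : (0 : ℝ) ≤ 108) (by linarith : (0 : ℝ) ≤ c + 1)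
    positivity
  calc _ ≤ (n : ℝ)⁻¹ * (7 * (10 / (c + 1)) ^ 2 * (M : ℝ) ^ (2 * c + 3)
          + 108 / (c + 1) * (M : ℝ) ^ (2 * c + 2) * ((n : ℝ) ^ c * n)) := by gcongr
    _ = 7 * (10 / (c + 1)) ^ 2 * (M : ℝ) ^ (2 * c + 3) * (n : ℝ)⁻¹
          + 108 / (c + 1) * (M : ℝ) ^ (2 * c + 2) * (n : ℝ) ^ c := by field_simp
    _ ≤ _ := by linarith

/-- the bound for the connected-diagram term
`γ_xx(r)γ_εε(r+q-p)γ_xε²(r+q)γ_εx²(r-p)` (Figure 7) in Part III of the proof of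
Lemma 1, for `1/3 < d_x, d_ε < 1/2`. -/
theorem figure7_diagram_bound (dx dε : ℝ)
    (hdx1 : 1 / 3 < dx) (hdx2 : dx < 1 / 2) (hdε1 : 1 / 3 < dε) (hdε2 : dε < 1 / 2) :
    ∃ C : ℝ, 0 < C ∧ ∀ n M : ℕ, 1 ≤ M → M ≤ n →
      (n : ℝ)⁻¹ *
          ∑ p ∈ Finset.Icc (-(M : ℤ)) (M : ℤ),
            ∑ q ∈ Finset.Icc (-(M : ℤ)) (M : ℤ),
              ∑ r ∈ Finset.Icc (-(n : ℤ) + 1) ((n : ℤ) - 1),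
                ((|r| : ℝ) + 1) ^ (2 * dx - 1) *
                  ((|r + p - q| : ℝ) + 1) ^ (2 * dε - 1) *
                  ((|r - p| : ℝ) + 1) ^ (2 * (dx + dε - 1)) *
                  ((|r + q| : ℝ) + 1) ^ (2 * (dx + dε - 1))
        ≤ C * ((M : ℝ) ^ (4 * dx + 4 * dε - 1) * (n : ℝ)⁻¹ +
            (M : ℝ) ^ (4 * dx + 4 * dε - 2) * (n : ℝ) ^ (2 * dx + 2 * dε - 2)) := by
  set c := 2 * (dx + dε - 1)
  have hc : 0 < c + 1 := by linarith
  refine ⟨7 * (10 / (c + 1)) ^ 2 + 108 / (c + 1),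
    add_pos_of_nonneg_of_pos (by positivity) (div_pos (by norm_num) hc), fun n M hM hMn => ?_⟩
  rw [show 4 * dx + 4 * dε - 1 = 2 * c + 3 by ring, show 4 * dx + 4 * dε - 2 = 2 * c + 2 by ring,
    show 2 * dx + 2 * dε - 2 = c by ring]
  exact sum_diagramTerm_le (by linarith) (by linarith) (by linarith) (by linarith) (by ring) hM hMn
end
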